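/- arXiv:1202.1083 — 8 statements merged into one kernel-verified Lean document; each statement's English description precedes it below -/
import Mathlib

section
/- Let S be a nonempty proper subset of V, let λ be an eigenvalue of the symmetric matrix M_S, and let x = (x_i)_{i∈S^c} be a corresponding eigenvector with Σ_{i∈S^c} x_i² = 1. Then −λ = Σ_{i∈S^c} Σ_{j∈S} q_{i,j} x_i² + (1/2) Σ_{i∈S^c} Σ_{j∈S^c} q_{i,j} (x_i − x_j)². -/
open Matrix Finset

/-- The symmetric matrix `M_S` indexed by the complement of `S`:
`(M_S)_{i,i} = -∑_l q_{i,l}` and `(M_S)_{i,j} = q_{i,j}` for `i ≠ j`. -/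
noncomputable def MS {n : ℕ} (Q : Matrix (Fin n) (Fin n) ℝ) (S : Finset (Fin n)) :
    Matrix ↥(Sᶜ) ↥(Sᶜ) ℝ :=
  fun i j => if (i : Fin n) = (j : Fin n) then -(∑ l, Q (i : Fin n) l) else Q (i : Fin n) (j : Fin n)

/-- If `λ` is an eigenvalue of `M_S` with normalized eigenvector `x`, then
`-λ = ∑_{i∈Sᶜ} ∑_{j∈S} q_{i,j} x_i² + (1/2) ∑_{i,j∈Sᶜ} q_{i,j} (x_i - x_j)²`. -/
theorem stmt2 (n : ℕ) (hn : 2 ≤ n) (Q : Matrix (Fin n) (Fin n) ℝ)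
    (hsymm : Q.IsSymm) (hnonneg : ∀ i j, 0 ≤ Q i j) (hdiag : ∀ i, Q i i = 0)
    (hconn : (SimpleGraph.fromRel (fun i j => 0 < Q i j)).Connected)
    (S : Finset (Fin n)) (hS : S.Nonempty) (hSproper : S ≠ Finset.univ)
    (lam : ℝ) (x : ↥(Sᶜ) → ℝ)
    (heig : (MS Q S).mulVec x = lam • x)
    (hnorm : ∑ i : ↥(Sᶜ), (x i) ^ 2 = 1) :
    -lam = (∑ i : ↥(Sᶜ), ∑ j ∈ S, Q (i : Fin n) j * (x i) ^ 2)
      + (1/2) * ∑ i : ↥(Sᶜ), ∑ j : ↥(Sᶜ), Q (i : Fin n) (j : Fin n) * (x i - x j) ^ 2 := by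
  classical
  have hsym : ∀ i j : Fin n, Q j i = Q i j := fun i j => hsymm.apply i j
  -- row sum expression for MS
  have hmul : ∀ i : ↥(Sᶜ), ∑ j : ↥(Sᶜ), MS Q S i j * x j
      = -(∑ l, Q (i : Fin n) l) * x i + ∑ j : ↥(Sᶜ), Q (i : Fin n) (j : Fin n) * x j := by
    intro i
    have h1 : ∀ j : ↥(Sᶜ), MS Q S i j * x j
        = (if i = j then -(∑ l, Q (i : Fin n) l) * x i else 0)
          + Q (i : Fin n) (j : Fin n) * x j := by
      intro j
      by_cases h : i = j
      · subst h; simp [MS, hdiag]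
      · have h' : ((i : Fin n) ≠ (j : Fin n)) := fun hc => h (Subtype.coe_injective hc)
        simp [MS, h', h]
    rw [Finset.sum_congr rfl (fun j _ => h1 j), Finset.sum_add_distrib, Finset.sum_ite_eq]
    simp
  have hlam : lam = ∑ i : ↥(Sᶜ), (∑ j : ↥(Sᶜ), MS Q S i j * x j) * x i := by
    calc lam = lam * ∑ i : ↥(Sᶜ), (x i) ^ 2 := by rw [hnorm]; ring
    _ = ∑ i : ↥(Sᶜ), (lam * x i) * x i := by
        rw [Finset.mul_sum]; exact Finset.sum_congr rfl fun i _ => by ring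
    _ = ∑ i : ↥(Sᶜ), (∑ j : ↥(Sᶜ), MS Q S i j * x j) * x i := by
        refine Finset.sum_congr rfl fun i _ => ?_
        have h := congrFun heig i
        simp only [Matrix.mulVec, dotProduct, Pi.smul_apply, smul_eq_mul] at h
        rw [← h]
  have hsplit : ∀ i : ↥(Sᶜ), (∑ l, Q (i : Fin n) l)
      = (∑ l ∈ S, Q (i : Fin n) l) + ∑ j : ↥(Sᶜ), Q (i : Fin n) (j : Fin n) := by
    intro i
    rw [Finset.sum_coe_sort (Sᶜ) (fun l => Q (i : Fin n) l), Finset.sum_add_sum_compl]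
  -- atoms
  have h1 : lam = -(∑ i : ↥(Sᶜ), ∑ l ∈ S, Q (i : Fin n) l * (x i) ^ 2)
      - (∑ i : ↥(Sᶜ), ∑ j : ↥(Sᶜ), Q (i : Fin n) (j : Fin n) * (x i) ^ 2)
      + (∑ i : ↥(Sᶜ), ∑ j : ↥(Sᶜ), Q (i : Fin n) (j : Fin n) * x j * x i) := by
    rw [hlam]
    have hterm : ∀ i : ↥(Sᶜ), (∑ j : ↥(Sᶜ), MS Q S i j * x j) * x i
        = (∑ l ∈ S, -(Q (i : Fin n) l * (x i) ^ 2))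
          + (∑ j : ↥(Sᶜ), -(Q (i : Fin n) (j : Fin n) * (x i) ^ 2))
          + ∑ j : ↥(Sᶜ), Q (i : Fin n) (j : Fin n) * x j * x i := by
      intro i
      rw [hmul i, hsplit i, Finset.sum_neg_distrib, Finset.sum_neg_distrib,
        ← Finset.sum_mul, ← Finset.sum_mul, ← Finset.sum_mul]
      ring
    rw [Finset.sum_congr rfl fun i _ => hterm i, Finset.sum_add_distrib,
      Finset.sum_add_distrib]
    simp [Finset.sum_neg_distrib]
    ring
  have hswap : (∑ i : ↥(Sᶜ), ∑ j : ↥(Sᶜ), Q (i : Fin n) (j : Fin n) * (x j) ^ 2)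
      = ∑ i : ↥(Sᶜ), ∑ j : ↥(Sᶜ), Q (i : Fin n) (j : Fin n) * (x i) ^ 2 := by
    rw [Finset.sum_comm]
    exact Finset.sum_congr rfl fun i _ => Finset.sum_congr rfl fun j _ => by rw [hsym]
  have h3 : (∑ i : ↥(Sᶜ), ∑ j : ↥(Sᶜ), Q (i : Fin n) (j : Fin n) * (x i - x j) ^ 2)
      = (∑ i : ↥(Sᶜ), ∑ j : ↥(Sᶜ), Q (i : Fin n) (j : Fin n) * (x i) ^ 2)
        + (∑ i : ↥(Sᶜ), ∑ j : ↥(Sᶜ), Q (i : Fin n) (j : Fin n) * (x j) ^ 2)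
        - 2 * (∑ i : ↥(Sᶜ), ∑ j : ↥(Sᶜ), Q (i : Fin n) (j : Fin n) * x j * x i) := by
    have hterm : ∀ i j : ↥(Sᶜ), Q (i : Fin n) (j : Fin n) * (x i - x j) ^ 2
        = Q (i : Fin n) (j : Fin n) * (x i) ^ 2 + Q (i : Fin n) (j : Fin n) * (x j) ^ 2
          - 2 * (Q (i : Fin n) (j : Fin n) * x j * x i) := fun i j => by ring
    simp_rw [hterm]
    rw [Finset.mul_sum]
    simp [Finset.sum_add_distrib, Finset.sum_sub_distrib, Finset.mul_sum]
  rw [h3]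
  linear_combination -h1 - (1/2) * hswap
end

section
/- For the complete graph of n > 1 nodes with q_{i,j} = 1/(n−1) for all i ≠ j, and any nonempty proper subset S ⊂ V, the spectrum of Q_S consists of: the eigenvalue −1 with multiplicity |S|, the eigenvalue −|S|/(n−1) with multiplicity 1, and the eigenvalue −n/(n−1) with multiplicity n−|S|−1. In particular, the largest eigenvalue of Q_S equals −|S|/(n−1). -/
/-!
The rows of `Q_S` indexed by `S` vanish off the diagonal, so `Q_S` is block triangular for the
splitting `V = Sᶜ ⊔ S` and its characteristic polynomial is the product of those of the two
diagonal blocks. The `S`-block is `-I`. With `b = 1/(n-1)`, the `Sᶜ`-block is `-(1+b) I + b J`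
for the all-ones matrix `J = 1 1ᵀ` of rank one, so its eigenvalues are `-1-b = -n/(n-1)`, with
multiplicity `n-|S|-1`, and `-1-b + (n-|S|) b = -|S|/(n-1)`. Real eigenvalues of a real matrix
are the real roots of its characteristic polynomial, and `-|S|/(n-1)` is the largest of the three
values.
-/

open Matrix Finset

/-- The matrix `Q_S`. -/
noncomputable def QS {n : ℕ} (Q : Matrix (Fin n) (Fin n) ℝ) (S : Finset (Fin n)) :
    Matrix (Fin n) (Fin n) ℝ :=
  fun i j => if i = j then -(∑ l, Q i l) else if i ∈ S then 0 else Q i j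

/-- The largest (real) eigenvalue of a matrix. -/
noncomputable def lambdaMax {n : ℕ} (M : Matrix (Fin n) (Fin n) ℝ) : ℝ :=
  sSup {μ : ℝ | ∃ x : Fin n → ℝ, x ≠ 0 ∧ M.mulVec x = μ • x}

/-- The complete-graph contact rate matrix with rates `1/(n-1)`. -/
noncomputable def Qcomplete (n : ℕ) : Matrix (Fin n) (Fin n) ℝ :=
  fun i j => if i = j then 0 else 1 / ((n : ℝ) - 1)

open Polynomial

namespace Matrix

variable {n R : Type*} [Fintype n] [DecidableEq n] [CommRing R]

theorem exists_mulVec_eq_smul_iff_isRoot_charpoly [IsDomain R] (M : Matrix n n R) (μ : R) :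
    (∃ x ≠ 0, M *ᵥ x = μ • x) ↔ M.charpoly.IsRoot μ := by
  rw [IsRoot, eval_charpoly, ← exists_mulVec_eq_zero_iff]
  simp only [sub_mulVec, scalar_apply, ← smul_one_eq_diagonal, smul_mulVec, one_mulVec,
    sub_eq_zero, eq_comm]

theorem twoBlockTriangular_charpoly (M : Matrix n n R) (p : n → Prop) [DecidablePred p]
    (h : ∀ i, ¬p i → ∀ j, p j → M i j = 0) :
    M.charpoly
      = (toSquareBlockProp M p).charpoly * (toSquareBlockProp M fun i => ¬p i).charpoly := by
  have hblock (q : n → Prop) [DecidablePred q] :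
      toSquareBlockProp (charmatrix M) q = charmatrix (toSquareBlockProp M q) := by
    ext i j
    simp [charmatrix_apply, toSquareBlockProp_def, diagonal_apply, Subtype.ext_iff]
  rw [charpoly, twoBlockTriangular_det _ p, hblock, hblock, charpoly, charpoly]
  intro i hi j hj
  have hij : i ≠ j := by rintro rfl; exact hi hj
  simp [charmatrix_apply_ne _ _ _ hij, h i hi j hj]

theorem charpoly_scalar (μ : R) : (scalar n μ).charpoly = (X - C μ) ^ Fintype.card n := by
  simp [scalar_apply, charpoly_diagonal]

theorem roots_charpoly_scalar [IsDomain R] (μ : R) :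
    (scalar n μ).charpoly.roots = Multiset.replicate (Fintype.card n) μ := by
  rw [charpoly_scalar, roots_pow, roots_X_sub_C, Multiset.nsmul_singleton]

theorem charpoly_scalar_add_vecMulVec [Nonempty n] (μ : R) (u v : n → R) :
    (scalar n μ + vecMulVec u v).charpoly
      = (X - C μ) ^ (Fintype.card n - 1) * (X - C (μ + u ⬝ᵥ v)) := by
  obtain ⟨k, hk⟩ : ∃ k, Fintype.card n = k + 1 :=
    Nat.exists_eq_succ_of_ne_zero Fintype.card_ne_zero
  rw [add_comm, ← sub_neg_eq_add, ← map_neg, charpoly_sub_scalar, charpoly_vecMulVec, hk]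
  simp only [sub_comp, pow_comp, mul_comp, C_comp, X_comp, map_neg, ← sub_eq_add_neg,
    Nat.add_sub_cancel, smul_eq_C_mul, map_add]
  ring

theorem roots_charpoly_scalar_add_vecMulVec [IsDomain R] [Nonempty n] (μ : R) (u v : n → R) :
    (scalar n μ + vecMulVec u v).charpoly.roots
      = (μ + u ⬝ᵥ v) ::ₘ Multiset.replicate (Fintype.card n - 1) μ := by
  rw [charpoly_scalar_add_vecMulVec, roots_mul (mul_ne_zero (pow_ne_zero _ (X_sub_C_ne_zero μ))
    (X_sub_C_ne_zero _)), roots_pow, roots_X_sub_C, roots_X_sub_C, Multiset.nsmul_singleton,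
    add_comm, Multiset.singleton_add]

end Matrix

theorem lambdaMax_eq_sSup_roots {n : ℕ} (M : Matrix (Fin n) (Fin n) ℝ) :
    lambdaMax M = sSup {μ | μ ∈ M.charpoly.roots} := by
  simp only [lambdaMax, exists_mulVec_eq_smul_iff_isRoot_charpoly,
    mem_roots M.charpoly_monic.ne_zero]

theorem QS_apply_eq_zero_of_mem {n : ℕ} (Q : Matrix (Fin n) (Fin n) ℝ) {S : Finset (Fin n)}
    {i j : Fin n} (hi : i ∈ S) (hij : i ≠ j) : QS Q S i j = 0 := by
  simp [QS, hi, hij]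

section CompleteGraph

variable {n : ℕ}

theorem cast_sub_one_pos (hn : 2 ≤ n) : 0 < (n : ℝ) - 1 := by
  have : (2 : ℝ) ≤ n := by exact_mod_cast hn
  linarith

theorem sum_Qcomplete (hn : 2 ≤ n) (i : Fin n) : ∑ l, Qcomplete n i l = 1 := by
  simp [Qcomplete, Finset.sum_ite, Finset.filter_ne, Nat.cast_sub (by omega : 1 ≤ n),
    (cast_sub_one_pos hn).ne']

theorem QS_Qcomplete_apply (hn : 2 ≤ n) (S : Finset (Fin n)) (i j : Fin n) :
    QS (Qcomplete n) S i j = if i = j then -1 else if i ∈ S then 0 else 1 / ((n : ℝ) - 1) := by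
  simp only [QS, sum_Qcomplete hn]
  split_ifs <;> simp_all [Qcomplete]

theorem toSquareBlockProp_QS_Qcomplete_mem (hn : 2 ≤ n) (S : Finset (Fin n)) :
    toSquareBlockProp (QS (Qcomplete n) S) (¬· ∉ S) = scalar _ (-1) := by
  ext i j
  have hi : (i : Fin n) ∈ S := not_not.mp i.2
  by_cases hij : i = j
  · subst hij; simp [toSquareBlockProp_def, QS_Qcomplete_apply hn]
  · simp [toSquareBlockProp_def, QS_Qcomplete_apply hn, hi, Subtype.ext_iff.not.mp hij, hij]

theorem toSquareBlockProp_QS_Qcomplete_notMem (hn : 2 ≤ n) (S : Finset (Fin n)) :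
    toSquareBlockProp (QS (Qcomplete n) S) (· ∉ S)
      = scalar _ (-1 - 1 / ((n : ℝ) - 1)) + vecMulVec (fun _ => 1 / ((n : ℝ) - 1)) 1 := by
  ext i j
  have hi : (i : Fin n) ∉ S := i.2
  by_cases hij : i = j
  · subst hij; simp [toSquareBlockProp_def, QS_Qcomplete_apply hn]
  · simp [toSquareBlockProp_def, QS_Qcomplete_apply hn, hi, Subtype.ext_iff.not.mp hij, hij]

theorem roots_charpoly_QS_Qcomplete (hn : 2 ≤ n) {S : Finset (Fin n)} (hSproper : S ≠ univ) :
    (QS (Qcomplete n) S).charpoly.roots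
      = Multiset.replicate S.card (-1 : ℝ)
        + ((-(S.card / ((n : ℝ) - 1)))
            ::ₘ Multiset.replicate (n - S.card - 1) (-((n : ℝ) / ((n : ℝ) - 1)))) := by
  have : Nonempty {i // i ∉ S} := by
    simpa [nonempty_subtype, Finset.eq_univ_iff_forall] using hSproper
  have hcard_Sc : Fintype.card {i // i ∉ S} = n - S.card := by
    simp [Fintype.card_subtype, Finset.filter_not, Finset.card_univ_sdiff]
  have hcard_S : Fintype.card {i // ¬i ∉ S} = S.card := by
    simp [Fintype.card_subtype]
  have hn' : (n : ℝ) - 1 ≠ 0 := (cast_sub_one_pos hn).ne'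
  have hdot : (fun _ => 1 / ((n : ℝ) - 1)) ⬝ᵥ (1 : {i // i ∉ S} → ℝ)
      = ((n : ℝ) - S.card) / ((n : ℝ) - 1) := by
    have hs : S.card ≤ n := card_le_univ S |>.trans_eq (Fintype.card_fin n)
    simp [dotProduct, hcard_Sc, Nat.cast_sub hs, div_eq_mul_inv]
  have hr1 : -1 - 1 / ((n : ℝ) - 1) + ((n : ℝ) - S.card) / ((n : ℝ) - 1)
      = -(S.card / ((n : ℝ) - 1)) := by
    field_simp
    ring
  have hr2 : -1 - 1 / ((n : ℝ) - 1) = -((n : ℝ) / ((n : ℝ) - 1)) := by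
    field_simp
    ring
  have htriangular : ∀ i, ¬i ∉ S → ∀ j, j ∉ S → QS (Qcomplete n) S i j = 0 :=
    fun i hi j hj => QS_apply_eq_zero_of_mem _ (not_not.mp hi) (by rintro rfl; exact hi hj)
  rw [twoBlockTriangular_charpoly _ (· ∉ S) htriangular,
    roots_mul (mul_ne_zero (charpoly_monic _).ne_zero (charpoly_monic _).ne_zero),
    toSquareBlockProp_QS_Qcomplete_mem hn, toSquareBlockProp_QS_Qcomplete_notMem hn,
    roots_charpoly_scalar, roots_charpoly_scalar_add_vecMulVec, hcard_S, hcard_Sc, add_comm,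
    hdot, hr1, hr2]

end CompleteGraph

theorem stmt6_general (n : ℕ) (hn : 2 ≤ n) (S : Finset (Fin n))
    (hSproper : S ≠ Finset.univ) :
    ((QS (Qcomplete n) S).charpoly).roots
      = Multiset.replicate S.card (-1 : ℝ)
        + ((-(S.card / ((n : ℝ) - 1)))
            ::ₘ Multiset.replicate (n - S.card - 1) (-((n : ℝ) / ((n : ℝ) - 1)))) ∧
    lambdaMax (QS (Qcomplete n) S) = -((S.card : ℝ) / ((n : ℝ) - 1)) := by
  have hroots := roots_charpoly_QS_Qcomplete hn hSproper
  refine ⟨hroots, ?_⟩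
  rw [lambdaMax_eq_sSup_roots, hroots]
  refine IsGreatest.csSup_eq ⟨by simp, ?_⟩
  have hn1 := cast_sub_one_pos hn
  have hs : S.card < n := by simpa using (card_lt_iff_ne_univ S).mpr hSproper
  rintro μ hμ
  simp only [Set.mem_ofPred_eq, Multiset.mem_add, Multiset.mem_replicate, Multiset.mem_cons] at hμ
  rcases hμ with ⟨-, rfl⟩ | rfl | ⟨-, rfl⟩
  · rw [neg_le_neg_iff, div_le_one hn1, le_sub_iff_add_le]
    exact_mod_cast hs
  · exact le_rfl
  · rw [neg_le_neg_iff]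
    gcongr

/-- For the complete graph with rates `1/(n-1)` and a nonempty proper subset `S` of `V`,
the spectrum of `Q_S` consists of `-1` with multiplicity `|S|`, `-|S|/(n-1)` with
multiplicity `1`, and `-n/(n-1)` with multiplicity `n-|S|-1`; in particular the largest
eigenvalue of `Q_S` equals `-|S|/(n-1)`. -/
theorem stmt6 (n : ℕ) (hn : 2 ≤ n) (S : Finset (Fin n))
    (hS : S.Nonempty) (hSproper : S ≠ Finset.univ) :
    ((QS (Qcomplete n) S).charpoly).roots
      = Multiset.replicate S.card (-1 : ℝ)
        + ((-(S.card / ((n : ℝ) - 1)))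
            ::ₘ Multiset.replicate (n - S.card - 1) (-((n : ℝ) / ((n : ℝ) - 1)))) ∧
    lambdaMax (QS (Qcomplete n) S) = -((S.card : ℝ) / ((n : ℝ) - 1)) :=
  stmt6_general n hn S hSproper
end

section
/- For the complete graph of n > 1 nodes with q_{i,j} = 1/(n−1) for all i ≠ j, and any α ∈ (1/2,1] such that (2α−1)n is a positive integer: every nonempty subset S ⊆ V with |S| ≥ (2α−1)n satisfies λ_{Q_S} ≤ −(2α−1), where λ_{Q_S} is the largest eigenvalue of Q_S; hence δ(Q,α) ≥ 2α−1. -/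
open Matrix Finset

lemma Qrowsum (n : ℕ) (hn : 2 ≤ n) (i : Fin n) : ∑ l, Qcomplete n i l = 1 := by
  have h2 : (2:ℝ) ≤ n := by exact_mod_cast hn
  have hne : (n:ℝ) - 1 ≠ 0 := by linarith
  unfold Qcomplete
  have h : ∀ l : Fin n, (if i = l then (0:ℝ) else 1/((n:ℝ)-1))
      = 1/((n:ℝ)-1) - (if i = l then 1/((n:ℝ)-1) else 0) := by
    intro l; split <;> ring
  rw [Finset.sum_congr rfl fun l _ => h l, Finset.sum_sub_distrib,
    Finset.sum_ite_eq, Finset.sum_const, Finset.card_univ, Fintype.card_fin]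
  simp only [Finset.mem_univ, if_true, nsmul_eq_mul]
  field_simp

lemma QS_entry (n : ℕ) (hn : 2 ≤ n) (S : Finset (Fin n)) (i j : Fin n) :
    QS (Qcomplete n) S i j =
      if i = j then -1 else if i ∈ S then 0 else 1/((n:ℝ)-1) := by
  unfold QS
  rw [Qrowsum n hn i]
  by_cases hij : i = j
  · simp [hij]
  · simp [hij, Qcomplete]

lemma mulVec_mem (n : ℕ) (hn : 2 ≤ n) (S : Finset (Fin n)) (x : Fin n → ℝ)
    (i : Fin n) (hi : i ∈ S) : (QS (Qcomplete n) S).mulVec x i = -x i := by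
  have h : (QS (Qcomplete n) S).mulVec x i = ∑ j, (if i = j then -x j else 0) := by
    unfold Matrix.mulVec dotProduct
    refine Finset.sum_congr rfl fun j _ => ?_
    show QS (Qcomplete n) S i j * x j = _
    rw [QS_entry n hn S i j]
    by_cases hij : i = j <;> simp [hij, hi]
  rw [h, Finset.sum_ite_eq]
  simp

lemma mulVec_notMem (n : ℕ) (hn : 2 ≤ n) (S : Finset (Fin n)) (x : Fin n → ℝ)
    (i : Fin n) (hi : i ∉ S) :
    (QS (Qcomplete n) S).mulVec x i
      = (1/((n:ℝ)-1)) * (∑ j, x j) + (-1 - 1/((n:ℝ)-1)) * x i := by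
  have h : (QS (Qcomplete n) S).mulVec x i
      = ∑ j, ((1/((n:ℝ)-1)) * x j + if i = j then (-1 - 1/((n:ℝ)-1)) * x j else 0) := by
    unfold Matrix.mulVec dotProduct
    refine Finset.sum_congr rfl fun j _ => ?_
    show QS (Qcomplete n) S i j * x j = _
    rw [QS_entry n hn S i j]
    by_cases hij : i = j <;> simp [hij, hi] <;> ring
  rw [h, Finset.sum_add_distrib, ← Finset.mul_sum, Finset.sum_ite_eq]
  simp

lemma eig_bound (n : ℕ) (hn : 2 ≤ n) (β : ℝ) (hβ0 : 0 < β) (hβ1 : β ≤ 1)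
    (S : Finset (Fin n)) (hScard : β * n ≤ S.card)
    (μ : ℝ) (x : Fin n → ℝ) (hx : x ≠ 0)
    (heig : (QS (Qcomplete n) S).mulVec x = μ • x) : μ ≤ -β := by
  have h2 : (2:ℝ) ≤ n := by exact_mod_cast hn
  have hpos : (0:ℝ) < (n:ℝ) - 1 := by linarith
  have hmem : ∀ i ∈ S, -x i = μ * x i := by
    intro i hi
    have h := congrFun heig i
    rw [mulVec_mem n hn S x i hi] at h
    rw [h]; simp
  have hnot : ∀ i ∉ S, (1/((n:ℝ)-1)) * (∑ j, x j) + (-1 - 1/((n:ℝ)-1)) * x i = μ * x i := by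
    intro i hi
    have h := congrFun heig i
    rw [mulVec_notMem n hn S x i hi] at h
    rw [h]; simp
  set c : ℝ := 1/((n:ℝ)-1) with hc
  have hcpos : 0 < c := by positivity
  by_cases hcase : ∃ i ∈ S, x i ≠ 0
  · obtain ⟨i, hi, hxi⟩ := hcase
    have h := hmem i hi
    have hμ : μ = -1 := by
      have h' : (μ + 1) * x i = 0 := by linear_combination -h
      rcases mul_eq_zero.mp h' with h'' | h''
      · linarith
      · exact absurd h'' hxi
    linarith
  · push_neg at hcase
    set T := ∑ j, x j with hTdef
    have hT : T = ∑ i ∈ Sᶜ, x i := by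
      rw [hTdef, ← Finset.sum_compl_add_sum S x,
        Finset.sum_eq_zero (fun i hi => hcase i hi)]
      ring
    by_cases hT0 : T = 0
    · obtain ⟨i, hxi⟩ := Function.ne_iff.mp hx
      have hiS : i ∉ S := fun h => hxi (hcase i h)
      have h := hnot i hiS
      rw [hT0] at h
      have h' : (μ + 1 + c) * x i = 0 := by linear_combination -h
      rcases mul_eq_zero.mp h' with h'' | h''
      · linarith
      · exact absurd h'' hxi
    · have hsum : ∑ i ∈ Sᶜ, (c * T + (-1 - c) * x i) = ∑ i ∈ Sᶜ, μ * x i :=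
        Finset.sum_congr rfl fun i hi => hnot i (Finset.mem_compl.mp hi)
      have hL : ∑ i ∈ Sᶜ, (c * T + (-1 - c) * x i)
          = (Sᶜ.card : ℝ) * (c * T) + (-1 - c) * T := by
        rw [Finset.sum_add_distrib, Finset.sum_const, nsmul_eq_mul, ← Finset.mul_sum, ← hT]
      have hR : ∑ i ∈ Sᶜ, μ * x i = μ * T := by rw [← Finset.mul_sum, ← hT]
      have hcc : (Sᶜ.card : ℝ) = (n:ℝ) - S.card := by
        rw [Finset.card_compl, Fintype.card_fin,
          Nat.cast_sub (Finset.card_le_univ S |>.trans_eq (by simp))]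
      rw [hL, hR, hcc] at hsum
      have key : (((n:ℝ) - S.card) * c + (-1 - c)) * T = μ * T := by
        linear_combination hsum
      have hμ : ((n:ℝ) - S.card) * c + (-1 - c) = μ := mul_right_cancel₀ hT0 key
      have hc' : c * ((n:ℝ) - 1) = 1 := by rw [hc]; field_simp
      nlinarith [hScard, hβ0, hcpos, hpos, hc', mul_le_mul_of_nonneg_right hScard (le_of_lt hcpos)]

lemma exists_eig (n : ℕ) (hn : 2 ≤ n) (S : Finset (Fin n)) :
    ∃ μ : ℝ, ∃ x : Fin n → ℝ, x ≠ 0 ∧ (QS (Qcomplete n) S).mulVec x = μ • x := by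
  have h2 : (2:ℝ) ≤ n := by exact_mod_cast hn
  have hne : (n:ℝ) - 1 ≠ 0 := by linarith
  by_cases hS : S = Finset.univ
  · refine ⟨-1, fun _ => 1, ?_, ?_⟩
    · intro h
      have := congrFun h ⟨0, by omega⟩
      simp at this
    · funext i
      rw [mulVec_mem n hn S _ i (hS ▸ Finset.mem_univ i)]
      simp
  · obtain ⟨i0, hi0⟩ : ∃ i, i ∉ S := by
      by_contra h; push_neg at h; exact hS (Finset.eq_univ_iff_forall.mpr h)
    set x : Fin n → ℝ := fun i => if i ∈ S then 0 else 1 with hxdef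
    have hcc : (Sᶜ.card : ℝ) = (n:ℝ) - S.card := by
      rw [Finset.card_compl, Fintype.card_fin,
        Nat.cast_sub (Finset.card_le_univ S |>.trans_eq (by simp))]
    have hT : ∑ j, x j = (Sᶜ.card : ℝ) := by
      rw [← Finset.sum_compl_add_sum S x]
      have h1 : ∑ j ∈ Sᶜ, x j = ∑ j ∈ Sᶜ, (1:ℝ) :=
        Finset.sum_congr rfl fun j hj => by simp [hxdef, Finset.mem_compl.mp hj]
      have h2 : ∑ j ∈ S, x j = 0 :=
        Finset.sum_eq_zero fun j hj => by simp [hxdef, hj]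
      rw [h1, h2, Finset.sum_const, nsmul_eq_mul]; ring
    refine ⟨-(S.card : ℝ)/((n:ℝ)-1), x, ?_, ?_⟩
    · intro h
      have := congrFun h i0
      simp [hxdef, hi0] at this
    · funext i
      by_cases hi : i ∈ S
      · rw [mulVec_mem n hn S x i hi]
        have hxi : x i = 0 := if_pos hi
        simp [Pi.smul_apply, smul_eq_mul, hxi]
      · rw [mulVec_notMem n hn S x i hi, hT, hcc]
        simp only [hxdef, Pi.smul_apply, smul_eq_mul, if_neg hi]
        field_simp
        ring

/-- For the complete graph with rates `1/(n-1)` and `α ∈ (1/2,1]` with `(2α-1)n` a positive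
integer `k`: every nonempty `S` with `|S| ≥ (2α-1)n` satisfies `λ_{Q_S} ≤ -(2α-1)`; hence
`δ(Q,α) ≥ 2α - 1`. -/
theorem stmt7 (n : ℕ) (hn : 2 ≤ n) (α : ℝ) (hα : 1/2 < α) (hα1 : α ≤ 1)
    (k : ℕ) (hk : 0 < k) (hkα : (k : ℝ) = (2*α - 1) * n) :
    (∀ S : Finset (Fin n), S.Nonempty → (2*α - 1) * n ≤ S.card →
      ∀ μ : ℝ, (∃ x : Fin n → ℝ, x ≠ 0 ∧ (QS (Qcomplete n) S).mulVec x = μ • x) →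
        μ ≤ -(2*α - 1)) ∧
    2*α - 1 ≤
      sInf {x : ℝ | ∃ S : Finset (Fin n), S.card = k ∧ x = |lambdaMax (QS (Qcomplete n) S)|} := by
  have hβ0 : 0 < 2*α - 1 := by linarith
  have hβ1 : 2*α - 1 ≤ 1 := by linarith
  have h2 : (2:ℝ) ≤ n := by exact_mod_cast hn
  constructor
  · rintro S hSne hScard μ ⟨x, hx, heig⟩
    exact eig_bound n hn _ hβ0 hβ1 S hScard μ x hx heig
  · have hkn : k ≤ n := by
      have : (k:ℝ) ≤ n := by rw [hkα]; nlinarith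
      exact_mod_cast this
    apply le_csInf
    · obtain ⟨S, -, hScard⟩ := Finset.exists_subset_card_eq
        (show k ≤ (Finset.univ : Finset (Fin n)).card by simpa using hkn)
      exact ⟨_, S, hScard, rfl⟩
    · rintro b ⟨S, hScard, rfl⟩
      have hcard : (2*α-1) * n ≤ (S.card : ℝ) := by rw [hScard, hkα]
      have hbdd : ∀ μ ∈ {μ : ℝ | ∃ x : Fin n → ℝ, x ≠ 0 ∧
          (QS (Qcomplete n) S).mulVec x = μ • x}, μ ≤ -(2*α-1) := by
        rintro μ ⟨x, hx, heig⟩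
        exact eig_bound n hn _ hβ0 hβ1 S hcard μ x hx heig
      have hne : {μ : ℝ | ∃ x : Fin n → ℝ, x ≠ 0 ∧
          (QS (Qcomplete n) S).mulVec x = μ • x}.Nonempty := by
        obtain ⟨μ, x, hx, heig⟩ := exists_eig n hn S
        exact ⟨μ, x, hx, heig⟩
      have hsup : lambdaMax (QS (Qcomplete n) S) ≤ -(2*α-1) := by
        rw [lambdaMax]; exact csSup_le hne hbdd
      calc 2*α-1 ≤ -(lambdaMax (QS (Qcomplete n) S)) := by linarith
        _ ≤ |lambdaMax (QS (Qcomplete n) S)| := neg_le_abs _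
end

section
/- Let a and b be integers with a > b ≥ 1. Then Σ_{i=0}^{b−1} 1/((a−i)(b−i)) = (1/(a−b))·(H_b + H_{a−b} − H_a), where H_k = Σ_{i=1}^{k} 1/i. Consequently, for the complete graph on n = a + b nodes with edge activation rates 1/(n−1), the expected duration of the first convergence phase, given by E(T₁) = (n−1) Σ_{i=0}^{b−1} 1/((a−i)(b−i)) when initially a nodes hold state 0 and b nodes hold state 1, equals (n−1)/(a−b) · (H_b + H_{a−b} − H_a). -/
open Finset

/-- The `k`-th harmR number `H_k = ∑_{i=1}^k 1/i`. -/
noncomputable def harmR (k : ℕ) : ℝ := ∑ i ∈ Finset.range k, 1 / ((i : ℝ) + 1)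

lemma sum_bi (b : ℕ) : (∑ i ∈ Finset.range b, 1 / ((b : ℝ) - i)) = harmR b := by
  rw [harmR, ← Finset.sum_range_reflect (fun i => 1 / ((i : ℝ) + 1)) b]
  apply Finset.sum_congr rfl
  intro j hj
  have hj' : j < b := Finset.mem_range.mp hj
  have : ((b - 1 - j : ℕ) : ℝ) = (b : ℝ) - 1 - j := by
    have h1 : 1 ≤ b := by omega
    push_cast [Nat.sub_sub, Nat.cast_sub (by omega : 1 + j ≤ b)]
    ring
  rw [this]; ring_nf

lemma sum_ai (a b : ℕ) (hab : b ≤ a) :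
    (∑ i ∈ Finset.range b, 1 / ((a : ℝ) - i)) = harmR a - harmR (a - b) := by
  have hsplit : harmR a = harmR (a - b) + ∑ j ∈ Finset.range b, 1 / (((a - b + j : ℕ) : ℝ) + 1) := by
    rw [harmR, harmR, ← Finset.sum_range_add (fun i => 1 / ((i : ℝ) + 1)) (a - b) b,
      Nat.sub_add_cancel hab]
  rw [hsplit]
  rw [← Finset.sum_range_reflect (fun i => 1 / ((a : ℝ) - i)) b]
  have : ∀ j ∈ Finset.range b,
      1 / ((a : ℝ) - ((b - 1 - j : ℕ) : ℝ)) = 1 / (((a - b + j : ℕ) : ℝ) + 1) := by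
    intro j hj
    have hj' : j < b := Finset.mem_range.mp hj
    have h1 : ((b - 1 - j : ℕ) : ℝ) = (b : ℝ) - 1 - j := by
      push_cast [Nat.sub_sub, Nat.cast_sub (by omega : 1 + j ≤ b)]
      ring
    have h2 : ((a - b + j : ℕ) : ℝ) = (a : ℝ) - b + j := by
      push_cast [Nat.cast_sub hab]; ring
    rw [h1, h2]; ring_nf
  rw [Finset.sum_congr rfl this]
  ring

/-- For integers `a > b ≥ 1`,
`∑_{i=0}^{b-1} 1/((a-i)(b-i)) = (1/(a-b))(H_b + H_{a-b} - H_a)`; consequently, for the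
complete graph on `n = a + b` nodes, the expected duration of the first phase
`E(T₁) = (n-1) ∑_{i=0}^{b-1} 1/((a-i)(b-i))` equals `(n-1)/(a-b)·(H_b + H_{a-b} - H_a)`. -/
theorem stmt8 (a b : ℕ) (hb : 1 ≤ b) (hab : b < a) :
    (∑ i ∈ Finset.range b, 1 / (((a : ℝ) - i) * ((b : ℝ) - i)))
      = (1 / ((a : ℝ) - b)) * (harmR b + harmR (a - b) - harmR a) ∧
    (((a + b : ℕ) : ℝ) - 1) * (∑ i ∈ Finset.range b, 1 / (((a : ℝ) - i) * ((b : ℝ) - i)))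
      = ((((a + b : ℕ) : ℝ) - 1) / ((a : ℝ) - b))
        * (harmR b + harmR (a - b) - harmR a) := by
  have key : (∑ i ∈ Finset.range b, 1 / (((a : ℝ) - i) * ((b : ℝ) - i)))
      = (1 / ((a : ℝ) - b)) * (harmR b + harmR (a - b) - harmR a) := by
    have step : ∀ i ∈ Finset.range b,
        1 / (((a : ℝ) - i) * ((b : ℝ) - i))
          = (1 / ((a : ℝ) - b)) * (1 / ((b : ℝ) - i) - 1 / ((a : ℝ) - i)) := by
      intro i hi
      have hi' : i < b := Finset.mem_range.mp hi
      have h1 : (i : ℝ) < b := by exact_mod_cast hi'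
      have h2 : (b : ℝ) < a := by exact_mod_cast hab
      have hb0 : (b : ℝ) - i ≠ 0 := by linarith
      have ha0 : (a : ℝ) - i ≠ 0 := by linarith
      have hab0 : (a : ℝ) - b ≠ 0 := by linarith
      field_simp
      ring
    rw [Finset.sum_congr rfl step, ← Finset.mul_sum, Finset.sum_sub_distrib,
      sum_bi b, sum_ai a b hab.le]
    ring
  exact ⟨key, by rw [key]; ring⟩
end

section
/- Fix α ∈ (1/2,1). There exists a constant C > 0 such that for every integer n ≥ 2 for which a := αn and b := (1−α)n are integers, |(n−1)/(a−b)·(H_b + H_{a−b} − H_a) − log(n)/(2α−1)| ≤ C. That is, for the complete graph of n nodes with rates 1/(n−1) and initial voting fraction α, the expected duration of the first phase satisfies E(T₁) = log(n)/(2α−1) + O(1). -/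
open Finset

lemma harmR_eq (k : ℕ) : harmR k = (harmonic k : ℝ) := by
  simp [harmR, harmonic, one_div]

lemma harmR_bounds (k : ℕ) (hk : 1 ≤ k) : |harmR k - Real.log k| ≤ 1 := by
  rw [abs_le]
  constructor
  · have h := log_add_one_le_harmonic k
    have h2 : Real.log k ≤ Real.log (k+1) := by
      apply Real.log_le_log (by exact_mod_cast hk)
      push_cast; linarith
    rw [harmR_eq]
    push_cast at h ⊢
    linarith
  · have h := harmonic_le_one_add_log k
    rw [harmR_eq]; linarith

/-- Fix `α ∈ (1/2,1)`. There is a constant `C > 0` such that for every `n ≥ 2` for which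
`a = αn` and `b = (1-α)n` are integers, the expected duration of the first phase on the
complete graph, `E(T₁) = (n-1)/(a-b)·(H_b + H_{a-b} - H_a)`, satisfies
`|E(T₁) - log(n)/(2α-1)| ≤ C`, i.e. `E(T₁) = log(n)/(2α-1) + O(1)`. -/
theorem stmt9 (α : ℝ) (hα : 1/2 < α) (hα1 : α < 1) :
    ∃ C : ℝ, 0 < C ∧ ∀ n : ℕ, 2 ≤ n → ∀ a b : ℕ,
      (a : ℝ) = α * n → (b : ℝ) = (1 - α) * n →
      |((n : ℝ) - 1) / ((a : ℝ) - (b : ℝ)) * (harmR b + harmR (a - b) - harmR a)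
        - Real.log n / (2*α - 1)| ≤ C := by
  have hd : 0 < 2*α - 1 := by linarith
  have h1a : 0 < 1 - α := by linarith
  have hα0 : 0 < α := by linarith
  set c : ℝ := Real.log (1-α) + Real.log (2*α-1) - Real.log α with hc
  set K : ℝ := 3 + |c| with hK
  have hK0 : 0 < K := by positivity
  refine ⟨(2*K + 1)/(2*α-1), by positivity, ?_⟩
  intro n hn a b ha hb
  have hn0 : (0:ℝ) < n := by positivity
  have hb1 : 1 ≤ b := by
    by_contra h
    have : b = 0 := by omega
    rw [this] at hb
    simp at hb
    rcases hb with h'|h'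
    · linarith
    · omega
  have ha1 : 1 ≤ a := by
    by_contra h
    have : a = 0 := by omega
    rw [this] at ha
    simp at ha
    rcases ha with h'|h'
    · linarith
    · omega
  have hba : b < a := by
    have : (b:ℝ) < (a:ℝ) := by rw [ha, hb]; nlinarith
    exact_mod_cast this
  have hsub : ((a - b : ℕ) : ℝ) = (2*α - 1) * n := by
    rw [Nat.cast_sub hba.le, ha, hb]; ring
  have hab1 : 1 ≤ a - b := by omega
  -- log identities
  have hlogb : Real.log b = Real.log (1-α) + Real.log n := by
    rw [hb, Real.log_mul (ne_of_gt h1a) (ne_of_gt hn0)]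
  have hloga : Real.log a = Real.log α + Real.log n := by
    rw [ha, Real.log_mul (ne_of_gt hα0) (ne_of_gt hn0)]
  have hlogab : Real.log ((a - b : ℕ) : ℝ) = Real.log (2*α-1) + Real.log n := by
    rw [hsub, Real.log_mul (ne_of_gt hd) (ne_of_gt hn0)]
  set S : ℝ := harmR b + harmR (a - b) - harmR a with hS
  have hbnd : |S - Real.log n| ≤ K := by
    have h1 := harmR_bounds b hb1
    have h2 := harmR_bounds (a-b) hab1
    have h3 := harmR_bounds a ha1
    have habs : |c| ≤ |c| := le_refl _
    have e : S - Real.log n = (harmR b - Real.log b) + (harmR (a-b) - Real.log ((a-b:ℕ):ℝ))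
        - (harmR a - Real.log a) + c := by
      rw [hlogb, hloga, hlogab, hc]; ring
    rw [e, hK]
    calc |(harmR b - Real.log b) + (harmR (a-b) - Real.log ((a-b:ℕ):ℝ))
        - (harmR a - Real.log a) + c|
        ≤ |harmR b - Real.log b| + |harmR (a-b) - Real.log ((a-b:ℕ):ℝ)|
          + |harmR a - Real.log a| + |c| := by
          have := abs_sub (harmR b - Real.log b + (harmR (a-b) - Real.log ((a-b:ℕ):ℝ))) (harmR a - Real.log a)
          have t1 := abs_add_le ((harmR b - Real.log b) + (harmR (a-b) - Real.log ((a-b:ℕ):ℝ)) - (harmR a - Real.log a)) c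
          have t2 := abs_sub ((harmR b - Real.log b) + (harmR (a-b) - Real.log ((a-b:ℕ):ℝ))) (harmR a - Real.log a)
          have t3 := abs_add_le (harmR b - Real.log b) (harmR (a-b) - Real.log ((a-b:ℕ):ℝ))
          linarith
      _ ≤ 3 + |c| := by linarith
  -- main algebra
  have hsubR : (a:ℝ) - (b:ℝ) = (2*α-1) * n := by rw [ha, hb]; ring
  have hlogn_le : Real.log n ≤ n := by
    have := Real.log_le_sub_one_of_pos hn0
    linarith
  have hlogn0 : 0 ≤ Real.log n := Real.log_nonneg (by exact_mod_cast Nat.one_le_of_lt hn)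
  have key : ((n:ℝ) - 1) / ((a:ℝ) - (b:ℝ)) * S - Real.log n / (2*α-1)
      = ((S - Real.log n) - S / n) / (2*α-1) := by
    rw [hsubR]
    field_simp
    ring
  rw [key, abs_div, abs_of_pos hd, div_le_div_iff_of_pos_right hd]
  have hSn : |S / n| ≤ K + 1 := by
    rw [abs_div, abs_of_pos hn0, div_le_iff₀ hn0]
    have hSle : |S| ≤ K + Real.log n := by
      have := abs_sub_abs_le_abs_sub S (Real.log n)
      rw [abs_of_nonneg hlogn0] at this
      linarith
    have h2n : (2:ℝ) ≤ n := by exact_mod_cast hn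
    nlinarith
  calc |(S - Real.log n) - S / n| ≤ |S - Real.log n| + |S / n| := abs_sub _ _
    _ ≤ K + (K + 1) := add_le_add hbnd hSn
    _ = 2*K + 1 := by ring
end

section
/- Consider the complete graph on n = 2b nodes with pairwise contact rates 1/(n−1), started with exactly b nodes in state 0 and b nodes in state 1 (an initial draw). Then the expected duration of the first phase is E(T₁) = (n−1)·Σ_{j=1}^{b} 1/j², and lim_{b→∞} E(T₁)/n = π²/6; i.e. E(T₁) = (π²/6)·n·(1+o(1)). -/
open Finset Filter

/-- The expected duration of the first phase on the complete graph of `n = 2b` nodes with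
contact rates `1/(n-1)`, started with `b` nodes in state 0 and `b` nodes in state 1:
`E(T₁) = (n-1) ∑_{i=0}^{b-1} 1/((b-i)(b-i))`. -/
noncomputable def ET1draw (b : ℕ) : ℝ :=
  ((2 * (b : ℝ)) - 1) * ∑ i ∈ Finset.range b, 1 / (((b : ℝ) - i) * ((b : ℝ) - i))

lemma sum_reflect_eq (b : ℕ) :
    ∑ i ∈ Finset.range b, 1 / (((b : ℝ) - i) * ((b : ℝ) - i))
      = ∑ j ∈ Finset.range b, 1 / ((j : ℝ) + 1) ^ 2 := by
  rw [← Finset.sum_range_reflect (fun i => 1 / (((b : ℝ) - i) * ((b : ℝ) - i))) b]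
  apply Finset.sum_congr rfl
  intro i hi
  have hi' := Finset.mem_range.mp hi
  have h1 : ((b - 1 - i : ℕ) : ℝ) = (b : ℝ) - 1 - i := by
    have h2 : (1 : ℕ) + i ≤ b := by omega
    push_cast [Nat.sub_sub, Nat.cast_sub h2]
    ring
  rw [h1]; ring_nf

lemma ET1draw_eq (b : ℕ) :
    ET1draw b = ((2 * (b : ℝ)) - 1) * ∑ j ∈ Finset.range b, 1 / ((j : ℝ) + 1) ^ 2 := by
  rw [ET1draw, sum_reflect_eq]

/-- For the complete graph on `n = 2b` nodes started from an initial draw,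
`E(T₁) = (n-1) ∑_{j=1}^b 1/j²` and `E(T₁)/n → π²/6`, i.e. `E(T₁) = (π²/6) n (1+o(1))`. -/
theorem stmt10 :
    (∀ b : ℕ, 1 ≤ b →
      ET1draw b = ((2 * (b : ℝ)) - 1) * ∑ j ∈ Finset.range b, 1 / ((j : ℝ) + 1) ^ 2) ∧
    Tendsto (fun b : ℕ => ET1draw b / (2 * (b : ℝ))) atTop (nhds (Real.pi ^ 2 / 6)) := by
  constructor
  · intro b _; exact ET1draw_eq b
  · have hS : Tendsto (fun b : ℕ => ∑ j ∈ Finset.range b, 1 / ((j : ℝ) + 1) ^ 2)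
        atTop (nhds (Real.pi ^ 2 / 6)) := by
      have h := hasSum_zeta_two.tendsto_sum_nat
      have h2 := h.comp (tendsto_add_atTop_nat 1)
      have : (fun b : ℕ => ∑ n ∈ Finset.range (b + 1), (1 : ℝ) / (n : ℝ) ^ 2)
          = fun b : ℕ => ∑ j ∈ Finset.range b, 1 / ((j : ℝ) + 1) ^ 2 := by
        funext b
        rw [Finset.sum_range_succ']
        simp
      rwa [Function.comp_def, this] at h2
    have hc : Tendsto (fun b : ℕ => ((2 * (b : ℝ)) - 1) / (2 * (b : ℝ)))
        atTop (nhds 1) := by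
      have hb : Tendsto (fun b : ℕ => (b : ℝ)) atTop atTop := tendsto_natCast_atTop_atTop
      have h2b : Tendsto (fun b : ℕ => 2 * (b : ℝ)) atTop atTop :=
        hb.const_mul_atTop (by norm_num)
      have hinv : Tendsto (fun b : ℕ => 1 / (2 * (b : ℝ))) atTop (nhds 0) :=
        h2b.inv_tendsto_atTop.congr (fun b => (one_div _).symm)
      have : Tendsto (fun b : ℕ => 1 - 1 / (2 * (b : ℝ))) atTop (nhds (1 - 0)) :=
        tendsto_const_nhds.sub hinv
      simp only [sub_zero] at this
      refine this.congr' ?_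
      filter_upwards [eventually_ge_atTop 1] with b hb1
      have : (2 : ℝ) * b ≠ 0 := by positivity
      field_simp
    have := hc.mul hS
    rw [one_mul] at this
    refine this.congr' ?_
    filter_upwards [eventually_ge_atTop 1] with b hb1
    rw [ET1draw_eq]; ring
end

section
/- Let Q be the contact-rate matrix of the path on n > 1 nodes (q_{i,i+1} = q_{i+1,i} = 1 for 1 ≤ i ≤ n−1, all other entries 0). For every integer k with 1 ≤ k < n, the maximum over subsets S ⊆ V with |S| = k of the largest eigenvalue of Q_S equals −2(1 − cos(π/(2(n−k)+1))). In particular, for α ∈ (1/2,1) with (2α−1)n an integer, δ(Q,α) = 2(1 − cos(π/(4(1−α)n+1))). -/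
open Matrix Finset Real

/-- The contact rate matrix of the path on `n` nodes: `q_{i,i+1} = q_{i+1,i} = 1`. -/
noncomputable def Qpath (n : ℕ) : Matrix (Fin n) (Fin n) ℝ :=
  fun i j => if (i : ℕ) + 1 = (j : ℕ) ∨ (j : ℕ) + 1 = (i : ℕ) then 1 else 0

/-!
If an eigenvector of `Q_S` is nonzero somewhere on `S`, its eigenvalue is minus a degree, hence
at most `-1`. Otherwise it vanishes on `S` and its Rayleigh quotient is minus the Dirichlet energy
`∑ (x i - x (i + 1))²` over `∑ x i²`. Cutting the path at zeros of `x` leaves runs of at most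
`m = n - |S|` vertices, each ending in a zero, and on such a run of length `ℓ` the energy is at
least `2 (1 - cos (π / (2ℓ + 1)))` times the mass: `φ i = cos ((i + 1/2) π / (2ℓ + 1))` is a
positive ground state vanishing just past the run, and Picone's identity followed by summation by
parts gives the bound. The same profile on the first `n - k` vertices, with `S` the last `k`, is
an eigenvector attaining it.
-/

noncomputable def pathGap (m : ℕ) : ℝ := 2 * (1 - cos (π / (2 * m + 1)))

noncomputable def pathProfile (m i : ℕ) : ℝ := cos ((i + 1 / 2) * (π / (2 * m + 1)))

lemma pathGap_nonneg (m : ℕ) : 0 ≤ pathGap m := by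
  have := cos_le_one (π / (2 * m + 1))
  unfold pathGap; linarith

lemma pathGap_antitone : Antitone pathGap := by
  intro l m hlm
  have hle : π / (2 * m + 1) ≤ π / (2 * l + 1) := by
    gcongr
  have := cos_le_cos_of_nonneg_of_le_pi (by positivity)
    (div_le_self pi_pos.le (by linarith [(Nat.cast_nonneg l : (0 : ℝ) ≤ l)])) hle
  unfold pathGap; linarith

lemma pathGap_le_one {m : ℕ} (hm : 1 ≤ m) : pathGap m ≤ 1 := by
  have hle : π / (2 * m + 1) ≤ π / 3 := by
    have : (1 : ℝ) ≤ m := by exact_mod_cast hm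
    gcongr; linarith
  have := cos_le_cos_of_nonneg_of_le_pi (by positivity) (by linarith [pi_pos]) hle
  rw [cos_pi_div_three] at this
  unfold pathGap; linarith

lemma pathProfile_pos {m i : ℕ} (hi : i < m) : 0 < pathProfile m i := by
  have hi' : (2 * i + 1 : ℝ) < 2 * m + 1 := by
    have : (i : ℝ) < m := by exact_mod_cast hi
    linarith
  have harg : (i + 1 / 2) * (π / (2 * m + 1)) = π / 2 * ((2 * i + 1) / (2 * m + 1)) := by
    field_simp
  apply cos_pos_of_mem_Ioo
  rw [harg]
  constructor
  · have : 0 ≤ π / 2 * ((2 * i + 1) / (2 * m + 1)) := by positivity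
    linarith [pi_pos]
  · exact mul_lt_of_lt_one_right (by positivity) ((div_lt_one (by positivity)).mpr hi')

lemma pathProfile_self (m : ℕ) : pathProfile m m = 0 := by
  rw [pathProfile, show (m + 1 / 2) * (π / (2 * m + 1)) = π / 2 by field_simp, cos_pi_div_two]

/-- `i - 1` is truncated subtraction, so at `i = 0` this reads `φ 0 - φ 1 = pathGap m * φ 0`:
the profile is the ground state of the path with a free left end. -/

lemma pathProfile_eigen (m i : ℕ) :
    2 * pathProfile m i - pathProfile m (i + 1) - pathProfile m (i - 1) =
      pathGap m * pathProfile m i := by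
  have hnext : pathProfile m (i + 1) =
      cos ((i + 1 / 2) * (π / (2 * m + 1)) + π / (2 * m + 1)) := by
    rw [pathProfile]; congr 1; push_cast; ring
  have hprev : pathProfile m (i - 1) =
      cos ((i + 1 / 2) * (π / (2 * m + 1)) - π / (2 * m + 1)) := by
    rcases i with _ | i
    · rw [pathProfile, ← cos_neg]; congr 1; push_cast; ring
    · rw [pathProfile]; congr 1; push_cast; ring
  rw [hnext, hprev, cos_add, cos_sub, pathGap, pathProfile]
  ring

/-- Picone's inequality on one edge; `q = 0` is allowed when `b = 0` (a Dirichlet endpoint). -/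
lemma sub_mul_sub_div_le_sq_sub {a b p q : ℝ} (hp : 0 < p) (hq : 0 ≤ q) (hb : q = 0 → b = 0) :
    (p - q) * (a ^ 2 / p - b ^ 2 / q) ≤ (a - b) ^ 2 := by
  rcases hq.eq_or_lt with hq0 | hq0
  · rw [← hq0, hb hq0.symm]
    field_simp
    simp
  · have key : (a - b) ^ 2 - (p - q) * (a ^ 2 / p - b ^ 2 / q) = (q * a - p * b) ^ 2 / (p * q) := by
      field_simp
      ring
    have : 0 ≤ (q * a - p * b) ^ 2 / (p * q) := by positivity
    linarith

/-- Summation by parts; at `i = 0` the truncated `i - 1` leaves the left end free. -/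

lemma sum_range_sub_succ_mul_sub_succ (φ w : ℕ → ℝ) (ℓ : ℕ) :
    ∑ i ∈ range ℓ, (φ i - φ (i + 1)) * (w i - w (i + 1)) =
      ∑ i ∈ range ℓ, w i * (2 * φ i - φ (i + 1) - φ (i - 1)) - w ℓ * (φ (ℓ - 1) - φ ℓ) := by
  induction ℓ with
  | zero => simp
  | succ ℓ ih =>
    rw [sum_range_succ, sum_range_succ, ih, Nat.add_sub_cancel]
    ring

lemma poincare_of_supersolution {ℓ : ℕ} {c : ℝ} {φ y : ℕ → ℝ} (hpos : ∀ i < ℓ, 0 < φ i)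
    (hend : 0 ≤ φ ℓ) (hsuper : ∀ i < ℓ, c * φ i ≤ 2 * φ i - φ (i + 1) - φ (i - 1))
    (hy : y ℓ = 0) :
    c * ∑ i ∈ range ℓ, y i ^ 2 ≤ ∑ i ∈ range ℓ, (y i - y (i + 1)) ^ 2 := by
  set w : ℕ → ℝ := fun i => y i ^ 2 / φ i
  have hpicone : ∀ i ∈ range ℓ, (φ i - φ (i + 1)) * (w i - w (i + 1)) ≤ (y i - y (i + 1)) ^ 2 := by
    intro i hi
    have hi := mem_range.mp hi
    rcases (show i + 1 = ℓ ∨ i + 1 < ℓ by omega) with h | h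
    · rw [h]
      exact sub_mul_sub_div_le_sq_sub (hpos i hi) hend fun _ => hy
    · exact sub_mul_sub_div_le_sq_sub (hpos i hi) (hpos _ h).le fun h0 => absurd h0 (hpos _ h).ne'
  have hsuper' : ∀ i ∈ range ℓ, c * y i ^ 2 ≤ w i * (2 * φ i - φ (i + 1) - φ (i - 1)) := by
    intro i hi
    have hi := mem_range.mp hi
    have hw : c * y i ^ 2 = w i * (c * φ i) := by
      simp only [w]; field_simp [(hpos i hi).ne']
    rw [hw]
    exact mul_le_mul_of_nonneg_left (hsuper i hi) (by positivity [(hpos i hi).le])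
  have hwℓ : w ℓ = 0 := by simp [w, hy]
  calc c * ∑ i ∈ range ℓ, y i ^ 2
      ≤ ∑ i ∈ range ℓ, w i * (2 * φ i - φ (i + 1) - φ (i - 1)) := by
        rw [mul_sum]; exact sum_le_sum hsuper'
    _ = ∑ i ∈ range ℓ, (φ i - φ (i + 1)) * (w i - w (i + 1)) := by
        rw [sum_range_sub_succ_mul_sub_succ, hwℓ, zero_mul, sub_zero]
    _ ≤ ∑ i ∈ range ℓ, (y i - y (i + 1)) ^ 2 := sum_le_sum hpicone

lemma card_filter_range_comp_le {r n : ℕ} (p : ℕ → Prop) [DecidablePred p] (f : ℕ → ℕ)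
    (hf : ∀ i < r, f i < n) (hinj : ∀ i < r, ∀ j < r, f i = f j → i = j) :
    #{i ∈ range r | p (f i)} ≤ #{i ∈ range n | p i} := by
  refine card_le_card_of_injOn f (fun i hi => ?_) (fun i hi j hj => ?_)
  · simp only [mem_coe, mem_filter, mem_range] at hi ⊢
    exact ⟨hf i hi.1, hi.2⟩
  · simp only [mem_coe, mem_filter, mem_range] at hi hj
    exact hinj i hi.1 j hj.1

lemma poincare_of_eq_zero_right {m n : ℕ} {x : ℕ → ℝ} (hxn : x n = 0)
    (hcard : #{i ∈ range n | x i ≠ 0} ≤ m) :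
    pathGap m * ∑ i ∈ range n, x i ^ 2 ≤ ∑ i ∈ range n, (x i - x (i + 1)) ^ 2 := by
  induction n using Nat.strong_induction_on generalizing x with
  | _ n ih =>
    by_cases hzero : ∃ j < n, x j = 0
    · -- cut at the zero `j` into two shorter paths, each ending in a zero
      obtain ⟨j, hjn, hxj⟩ := hzero
      obtain ⟨r, rfl⟩ : ∃ r, n = j + 1 + r := ⟨n - (j + 1), by omega⟩
      have hleft := ih j hjn hxj <|
        (card_filter_range_comp_le _ id (fun _ _ => by simp only [id]; omega) (by simp)).trans hcard
      have hright := ih r (by omega) (x := fun i => x (j + 1 + i)) hxn <|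
        (card_filter_range_comp_le (fun k => x k ≠ 0) (j + 1 + ·) (by omega) (by omega)).trans hcard
      rw [sum_range_add (fun i => x i ^ 2) (j + 1),
        sum_range_add (fun i => (x i - x (i + 1)) ^ 2) (j + 1), sum_range_succ, sum_range_succ, hxj]
      simp only [← add_assoc] at hright
      rw [mul_add, mul_add]
      linarith [sq_nonneg (0 - x (j + 1))]
    · push Not at hzero
      have hnm : n ≤ m := by
        rwa [filter_true_of_mem fun i hi => hzero i (mem_range.mp hi), card_range] at hcard
      calc pathGap m * ∑ i ∈ range n, x i ^ 2
          ≤ pathGap n * ∑ i ∈ range n, x i ^ 2 :=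
            mul_le_mul_of_nonneg_right (pathGap_antitone hnm) (by positivity)
        _ ≤ ∑ i ∈ range n, (x i - x (i + 1)) ^ 2 :=
            poincare_of_supersolution (fun _ => pathProfile_pos) (pathProfile_self n).ge
              (fun i _ => (pathProfile_eigen n i).ge) hxn

lemma poincare_of_eq_zero {m n j : ℕ} {x : ℕ → ℝ} (hjn : j < n) (hxj : x j = 0)
    (hcard : #{i ∈ range n | x i ≠ 0} ≤ m) :
    pathGap m * ∑ i ∈ range n, x i ^ 2 ≤ ∑ i ∈ range (n - 1), (x i - x (i + 1)) ^ 2 := by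
  obtain ⟨r, rfl⟩ : ∃ r, n = j + 1 + r := ⟨n - (j + 1), by omega⟩
  have hleft : pathGap m * ∑ i ∈ range j, x i ^ 2 ≤ ∑ i ∈ range j, (x i - x (i + 1)) ^ 2 :=
    poincare_of_eq_zero_right hxj <|
      (card_filter_range_comp_le _ id (fun i hi => by simp only [id]; omega) (by simp)).trans hcard
  -- the part right of `j`, read backwards, ends in the zero at `j`
  have hright := poincare_of_eq_zero_right (m := m) (n := r) (x := fun i => x (j + r - i))
    (by simpa using hxj) <|
      (card_filter_range_comp_le (fun k => x k ≠ 0) (j + r - ·) (by omega) (by omega)).trans hcard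
  have hsq : ∑ i ∈ range r, x (j + r - i) ^ 2 = ∑ i ∈ range r, x (j + 1 + i) ^ 2 := by
    rw [← sum_range_reflect (fun i => x (j + 1 + i) ^ 2)]
    refine sum_congr rfl fun i hi => ?_
    rw [show j + 1 + (r - 1 - i) = j + r - i by have := mem_range.mp hi; omega]
  have hdiff : ∑ i ∈ range r, (x (j + r - i) - x (j + r - (i + 1))) ^ 2 =
      ∑ i ∈ range r, (x (j + i) - x (j + i + 1)) ^ 2 := by
    rw [← sum_range_reflect (fun i => (x (j + i) - x (j + i + 1)) ^ 2)]
    refine sum_congr rfl fun i hi => ?_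
    have := mem_range.mp hi
    rw [show j + (r - 1 - i) = j + r - (i + 1) by omega,
      show j + r - (i + 1) + 1 = j + r - i by omega]
    ring
  rw [hsq, hdiff] at hright
  rw [sum_range_add (fun i => x i ^ 2) (j + 1), sum_range_succ, hxj,
    show j + 1 + r - 1 = j + r by omega, sum_range_add (fun i => (x i - x (i + 1)) ^ 2)]
  rw [mul_add, mul_add]
  linarith

lemma Matrix.exists_mulVec_eq_diag_smul {ι K : Type*} [Fintype ι] [DecidableEq ι] [CommRing K]
    [IsDomain K] (M : Matrix ι ι K) {i : ι} (h : ∀ j ≠ i, M i j = 0) :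
    ∃ v ≠ 0, M *ᵥ v = M i i • v := by
  have hdet : (M - M i i • 1).det = 0 := by
    refine det_eq_zero_of_row_eq_zero i fun j => ?_
    by_cases hj : j = i
    · simp [hj]
    · simp [h j hj, Ne.symm hj]
  obtain ⟨v, hv, hker⟩ := exists_mulVec_eq_zero_iff.mpr hdet
  refine ⟨v, hv, ?_⟩
  rwa [sub_mulVec, smul_mulVec, one_mulVec, sub_eq_zero] at hker

lemma lambdaMax_le {n : ℕ} {M : Matrix (Fin n) (Fin n) ℝ} {a : ℝ}
    (hne : ∃ μ : ℝ, ∃ x ≠ 0, M *ᵥ x = μ • x) (h : ∀ μ, ∀ x ≠ 0, M *ᵥ x = μ • x → μ ≤ a) :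
    lambdaMax M ≤ a :=
  csSup_le hne fun μ ⟨x, hx, hμ⟩ => h μ x hx hμ

lemma lambdaMax_eq {n : ℕ} {M : Matrix (Fin n) (Fin n) ℝ} {a : ℝ}
    (ha : ∃ x ≠ 0, M *ᵥ x = a • x) (h : ∀ μ, ∀ x ≠ 0, M *ᵥ x = μ • x → μ ≤ a) :
    lambdaMax M = a :=
  IsGreatest.csSup_eq ⟨ha, fun μ ⟨x, hx, hμ⟩ => h μ x hx hμ⟩

section QS

variable {n : ℕ} {Q : Matrix (Fin n) (Fin n) ℝ} {S : Finset (Fin n)} {i : Fin n}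

lemma QS_mulVec_apply_of_mem (hi : i ∈ S) (x : Fin n → ℝ) :
    (QS Q S *ᵥ x) i = -(∑ l, Q i l) * x i := by
  rw [mulVec, dotProduct, sum_eq_single i (fun j _ hj => by simp [QS, hi, Ne.symm hj]) (by simp)]
  simp [QS]

lemma QS_mulVec_apply_of_notMem (hQ : Q i i = 0) (hi : i ∉ S) (x : Fin n → ℝ) :
    (QS Q S *ᵥ x) i = ∑ j, Q i j * (x j - x i) := by
  have hrow : ∀ j, QS Q S i j = Q i j - if i = j then ∑ l, Q i l else 0 := by
    intro j
    by_cases hij : i = j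
    · subst hij; simp [QS, hQ]
    · simp [QS, hij, hi]
  simp only [mulVec, dotProduct, hrow, sub_mul, sum_sub_distrib, ite_mul, zero_mul, sum_ite_eq,
    mem_univ, if_true, mul_sub, sum_mul]

lemma QS_exists_eigenvector (Q : Matrix (Fin n) (Fin n) ℝ) (hS : S.Nonempty) :
    ∃ μ : ℝ, ∃ x ≠ 0, QS Q S *ᵥ x = μ • x := by
  obtain ⟨i, hi⟩ := hS
  exact ⟨_, (QS Q S).exists_mulVec_eq_diag_smul (i := i) fun j hj => by simp [QS, hi, Ne.symm hj]⟩

end QS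

section Qpath

variable {n : ℕ}

lemma Qpath_apply_self (i : Fin n) : Qpath n i i = 0 := by
  simp [Qpath]

lemma sum_Qpath_mul (i : Fin n) (g : ℕ → ℝ) :
    ∑ j, Qpath n i j * g j =
      (if (i : ℕ) + 1 < n then g (i + 1) else 0) + (if 0 < (i : ℕ) then g (i - 1) else 0) := by
  have hsplit : ∀ j : Fin n, Qpath n i j * g j =
      (if (i : ℕ) + 1 = j then g j else 0) + (if (j : ℕ) + 1 = i then g j else 0) := by
    intro j
    unfold Qpath
    by_cases h1 : (i : ℕ) + 1 = j <;> by_cases h2 : (j : ℕ) + 1 = i <;> simp [h1, h2]; omega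
  simp only [hsplit, sum_add_distrib]
  rw [Fin.sum_univ_eq_sum_range (fun j => if (i : ℕ) + 1 = j then g j else 0),
    Fin.sum_univ_eq_sum_range (fun j => if j + 1 = (i : ℕ) then g j else 0), sum_ite_eq]
  simp only [mem_range]
  congr 1
  rcases Nat.eq_zero_or_pos (i : ℕ) with h0 | h0
  · simp [h0]
  · have : ∀ j, j + 1 = (i : ℕ) ↔ (i : ℕ) - 1 = j := fun j => by omega
    simp only [this, sum_ite_eq, mem_range, h0, if_true]
    rw [if_pos (by omega)]

lemma sum_mul_sum_Qpath_mul_sub (X : ℕ → ℝ) :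
    ∑ i : Fin n, X i * ∑ j, Qpath n i j * (X j - X i) =
      -∑ i ∈ range (n - 1), (X i - X (i + 1)) ^ 2 := by
  rw [sum_congr rfl fun (i : Fin n) _ => congrArg (X i * ·) (sum_Qpath_mul i fun k => X k - X i),
    Fin.sum_univ_eq_sum_range (fun i => X i * ((if i + 1 < n then X (i + 1) - X i else 0) +
      (if 0 < i then X (i - 1) - X i else 0))) n]
  rcases n with _ | n
  · simp
  simp only [mul_add, sum_add_distrib, add_tsub_cancel_right]
  rw [sum_range_succ, sum_range_succ']
  simp only [lt_irrefl, if_false, mul_zero, add_zero, add_lt_add_iff_right, Nat.succ_pos,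
    add_tsub_cancel_right, if_true, ← sum_add_distrib, ← sum_neg_distrib]
  refine sum_congr rfl fun i hi => ?_
  rw [if_pos (mem_range.mp hi)]
  ring

end Qpath

lemma le_neg_pathGap_of_mulVec_QS_Qpath {n : ℕ} {S : Finset (Fin n)} (hS : S.Nonempty)
    (hSn : #S < n) {μ : ℝ} {x : Fin n → ℝ} (hx : x ≠ 0) (hμ : QS (Qpath n) S *ᵥ x = μ • x) :
    μ ≤ -pathGap (n - #S) := by
  obtain ⟨X, rfl⟩ : ∃ X : ℕ → ℝ, x = fun i : Fin n => X i :=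
    ⟨Function.extend Fin.val x 0, funext fun i => (Fin.val_injective.extend_apply x 0 i).symm⟩
  have hrow : ∀ i, (QS (Qpath n) S *ᵥ fun j : Fin n => X j) i = μ * X i := fun i => by
    rw [hμ, Pi.smul_apply, smul_eq_mul]
  by_cases hsupp : ∃ i ∈ S, X i ≠ 0
  · obtain ⟨i, hi, hXi⟩ := hsupp
    have hμdeg : μ = -∑ l, Qpath n i l :=
      mul_right_cancel₀ hXi ((hrow i).symm.trans (QS_mulVec_apply_of_mem hi _))
    have hdeg : 1 ≤ ∑ l, Qpath n i l := by
      have := hS.card_pos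
      have := sum_Qpath_mul i fun _ => 1
      simp only [mul_one] at this
      rw [this]
      split_ifs <;> norm_num
      omega
    linarith [pathGap_le_one (m := n - #S) (by omega)]
  push Not at hsupp
  have hform : μ * ∑ i ∈ range n, X i ^ 2 = -∑ i ∈ range (n - 1), (X i - X (i + 1)) ^ 2 := by
    rw [← sum_mul_sum_Qpath_mul_sub, ← Fin.sum_univ_eq_sum_range (fun i => X i ^ 2), mul_sum]
    refine sum_congr rfl fun i _ => ?_
    by_cases hi : i ∈ S
    · simp [hsupp i hi]
    · rw [← QS_mulVec_apply_of_notMem (S := S) (Qpath_apply_self i) hi (fun j => X j), hrow]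
      ring
  have hcard : #{i ∈ range n | X i ≠ 0} ≤ n - #S := by
    calc #{i ∈ range n | X i ≠ 0} ≤ #(Sᶜ.image Fin.val) := by
          refine card_le_card fun i hi => ?_
          simp only [mem_filter, mem_range] at hi
          exact mem_image.mpr ⟨⟨i, hi.1⟩, mem_compl.mpr fun h => hi.2 (hsupp _ h), rfl⟩
      _ ≤ #Sᶜ := card_image_le
      _ = n - #S := by rw [card_compl, Fintype.card_fin]
  obtain ⟨j, hj⟩ := hS
  have hpoincare := poincare_of_eq_zero j.isLt (hsupp j hj) hcard
  have hpos : 0 < ∑ i ∈ range n, X i ^ 2 := by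
    obtain ⟨i, hi⟩ := Function.ne_iff.mp hx
    exact sum_pos' (fun _ _ => sq_nonneg _)
      ⟨i, mem_range.mpr i.isLt, sq_pos_of_ne_zero (by simpa using hi)⟩
  refine le_of_mul_le_mul_right ?_ hpos
  linarith

lemma QS_Qpath_Ici_mulVec {m n : ℕ} (hmn : m < n) :
    QS (Qpath n) (Ici ⟨m, hmn⟩) *ᵥ (fun i : Fin n => if (i : ℕ) < m then pathProfile m i else 0) =
      -pathGap m • fun i : Fin n => if (i : ℕ) < m then pathProfile m i else 0 := by
  set X : ℕ → ℝ := fun k => if k < m then pathProfile m k else 0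
  have hX : ∀ k ≤ m, X k = pathProfile m k := fun k hk => by
    rcases hk.lt_or_eq with hk | rfl
    · simp [X, hk]
    · simp [X, pathProfile_self]
  funext i
  rw [Pi.smul_apply, smul_eq_mul]
  by_cases hi : m ≤ (i : ℕ)
  · rw [QS_mulVec_apply_of_mem (mem_Ici.mpr (Fin.le_def.mpr hi))]
    simp [not_lt.mpr hi]
  have hprev : (if 0 < (i : ℕ) then X (i - 1) - X i else 0) =
      pathProfile m (i - 1) - pathProfile m i := by
    split_ifs with h0
    · rw [hX _ (by omega), hX _ (by omega)]
    · simp [show (i : ℕ) = 0 by omega]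
  rw [QS_mulVec_apply_of_notMem (Qpath_apply_self i) (fun h => hi (Fin.le_def.mp (mem_Ici.mp h))),
    sum_Qpath_mul i fun k => X k - X i, if_pos (by omega), hprev, hX _ (by omega), hX _ (by omega),
    if_pos (show (i : ℕ) < m by omega)]
  linarith [pathProfile_eigen m i]

lemma isGreatest_lambdaMax_QS_Qpath {n k : ℕ} (hk : 1 ≤ k) (hkn : k < n) :
    IsGreatest {x : ℝ | ∃ S : Finset (Fin n), S.card = k ∧ x = lambdaMax (QS (Qpath n) S)}
      (-pathGap (n - k)) := by
  have hbound : ∀ S : Finset (Fin n), #S = k →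
      ∀ μ, ∀ x ≠ 0, QS (Qpath n) S *ᵥ x = μ • x → μ ≤ -pathGap (n - k) := by
    rintro S rfl μ x hx hμ
    exact le_neg_pathGap_of_mulVec_QS_Qpath (card_pos.mp (by omega)) hkn hx hμ
  have hcard : #(Ici (⟨n - k, by omega⟩ : Fin n)) = k := by
    rw [Fin.card_Ici, Fin.val_mk]; omega
  have hprofile : (fun i : Fin n => if (i : ℕ) < n - k then pathProfile (n - k) i else 0) ≠ 0 :=
    fun h => (pathProfile_pos (m := n - k) (i := 0) (by omega)).ne' <| by
      simpa [show 0 < n - k by omega] using congrFun h ⟨0, by omega⟩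
  refine ⟨⟨_, hcard, (lambdaMax_eq ⟨_, hprofile, QS_Qpath_Ici_mulVec _⟩ (hbound _ hcard)).symm⟩, ?_⟩
  rintro _ ⟨S, hS, rfl⟩
  exact lambdaMax_le (QS_exists_eigenvector _ (card_pos.mp (by omega))) (hbound S hS)

/-- For the path on `n > 1` nodes: for every `1 ≤ k < n`, the maximum over `S` with `|S| = k`
of the largest eigenvalue of `Q_S` equals `-2(1 - cos(π/(2(n-k)+1)))`; in particular for
`α ∈ (1/2,1)` with `(2α-1)n` an integer,
`δ(Q,α) = 2(1 - cos(π/(4(1-α)n+1)))`. -/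
theorem stmt11 (n : ℕ) (hn : 2 ≤ n) :
    (∀ k : ℕ, 1 ≤ k → k < n →
      IsGreatest {x : ℝ | ∃ S : Finset (Fin n), S.card = k ∧ x = lambdaMax (QS (Qpath n) S)}
        (-2 * (1 - Real.cos (Real.pi / (2 * ((n : ℝ) - k) + 1))))) ∧
    (∀ α : ℝ, 1/2 < α → α < 1 → ∀ k : ℕ, (k : ℝ) = (2*α - 1) * n →
      IsLeast {x : ℝ | ∃ S : Finset (Fin n), S.card = k ∧ x = |lambdaMax (QS (Qpath n) S)|}
        (2 * (1 - Real.cos (Real.pi / (4 * (1 - α) * n + 1))))) := by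
  have hgap : ∀ {k}, k ≤ n → pathGap (n - k) = 2 * (1 - cos (π / (2 * ((n : ℝ) - k) + 1))) := by
    intro k hkn
    rw [pathGap, Nat.cast_sub hkn]
  refine ⟨fun k hk hkn => by simpa [hgap hkn.le] using isGreatest_lambdaMax_QS_Qpath hk hkn, ?_⟩
  intro α hα hα' k hkα
  have hn0 : (0 : ℝ) < n := Nat.cast_pos.mpr (by omega)
  have hk : 1 ≤ k := by
    have : (0 : ℝ) < k := by rw [hkα]; exact mul_pos (by linarith) hn0
    exact_mod_cast this
  have hkn : k < n := by
    have : (k : ℝ) < n := by rw [hkα]; nlinarith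
    exact_mod_cast this
  have hval : 2 * (1 - cos (π / (4 * (1 - α) * n + 1))) = pathGap (n - k) := by
    rw [hgap hkn.le, hkα]; ring_nf
  obtain ⟨⟨S, hS, hSval⟩, hub⟩ := isGreatest_lambdaMax_QS_Qpath hk hkn
  refine ⟨⟨S, hS, ?_⟩, ?_⟩
  · rw [hval, ← hSval, abs_neg, abs_of_nonneg (pathGap_nonneg _)]
  · rintro _ ⟨S', hS', rfl⟩
    rw [hval]
    linarith [neg_le_abs (lambdaMax (QS (Qpath n) S')), hub ⟨S', hS', rfl⟩]
end

section
/- Let Q be the contact-rate matrix of the star on n > 1 nodes with hub 1 (q_{1,i} = q_{i,1} = 1/(n−1) for i = 2,…,n, all other entries 0), and let S be a nonempty proper subset of V. If 1 ∈ S, the largest eigenvalue of Q_S equals −1/(n−1). If 1 ∉ S, the largest eigenvalue of Q_S equals −(1/2)·(n/(n−1))·(1 − √(1 − 4|S|/n²)). -/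
open Matrix Finset Real

/-- The contact rate matrix of the star on `n` nodes with hub node `1` (index `0`):
`q_{1,i} = q_{i,1} = 1/(n-1)` for the leaves, all other entries `0`. -/
noncomputable def Qstar (n : ℕ) : Matrix (Fin n) (Fin n) ℝ :=
  fun i j => if ((i : ℕ) = 0 ∧ (j : ℕ) ≠ 0) ∨ ((j : ℕ) = 0 ∧ (i : ℕ) ≠ 0)
    then 1 / ((n : ℝ) - 1) else 0

/-! Write `a = 1/(n-1)` and let `z` be the hub. Row by row, `Q_S x` is `-x_z` or
`-x_z + a (∑ x - x_z)` at the hub (according as `z ∈ S` or not) and `-a x_i` or `-a x_i + a x_z`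
at a leaf `i`. If `z ∈ S` the hub decouples and the only eigenvalues are `-1 ≤ -a` and `-a`.
If `z ∉ S`, an eigenvector for `ν ≠ -a` vanishes on `S`, equals `a x_z / (ν + a)` on the other
leaves, and the hub row forces `(ν + 1)(ν + a) = (n - 1 - |S|) a²`, i.e.
`(n-1) ν² + n ν + |S|/(n-1) = 0`. Its larger root `(√(n² - 4|S|) - n)/(2(n-1))` is `≥ -a`, with
equality exactly when `S` is the set of all leaves; then `-a` is the root and needs its own
eigenvector. -/

lemma QS_mulVec_apply {n : ℕ} (Q : Matrix (Fin n) (Fin n) ℝ) (S : Finset (Fin n))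
    (x : Fin n → ℝ) {i : Fin n} (hQ : Q i i = 0) :
    (QS Q S *ᵥ x) i = -(∑ l, Q i l) * x i + if i ∈ S then 0 else (Q *ᵥ x) i := by
  by_cases hi : i ∈ S
  · simp [QS, mulVec, dotProduct, hi, ite_mul]
  · have hrow : ∀ j, QS Q S i j = (if i = j then -(∑ l, Q i l) else 0) + Q i j := by
      intro j
      by_cases hij : i = j
      · subst hij; simp [QS, hQ]
      · simp [QS, hij, hi]
    simp [mulVec, dotProduct, hrow, hi, add_mul, Finset.sum_add_distrib, ite_mul]

lemma lambdaMax_eq_of_eigen {n : ℕ} {M : Matrix (Fin n) (Fin n) ℝ} {μ : ℝ}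
    (hμ : ∃ x, x ≠ 0 ∧ M *ᵥ x = μ • x)
    (hle : ∀ ν (x : Fin n → ℝ), x ≠ 0 → M *ᵥ x = ν • x → ν ≤ μ) :
    lambdaMax M = μ :=
  IsGreatest.csSup_eq ⟨hμ, fun ν ⟨x, hx, h⟩ => hle ν x hx h⟩

lemma sum_ite_mem_zero_const {n : ℕ} (S : Finset (Fin n)) (t : ℝ) :
    ∑ j, (if j ∈ S then 0 else t) = ((n : ℝ) - #S) * t := by
  rw [Finset.sum_ite, Finset.sum_const_zero, zero_add, Finset.sum_const, nsmul_eq_mul,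
    Finset.filter_not, Finset.card_sdiff]
  simp [Nat.cast_sub (by simpa using S.card_le_univ : #S ≤ n)]

lemma star_charEq_iff {N k ν : ℝ} (hN : N - 1 ≠ 0) (hk : 4 * k ≤ N ^ 2) :
    (ν + 1) * (ν + 1 / (N - 1)) = (N - 1 - k) * (1 / (N - 1)) ^ 2 ↔
      ν = (-N + √(N ^ 2 - 4 * k)) / (2 * (N - 1)) ∨
        ν = (-N - √(N ^ 2 - 4 * k)) / (2 * (N - 1)) := by
  have hdisc : discrim (N - 1) N (k / (N - 1)) = √(N ^ 2 - 4 * k) * √(N ^ 2 - 4 * k) := by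
    rw [Real.mul_self_sqrt (by linarith), discrim]
    field_simp
  have hquad : (N - 1) * (ν * ν) + N * ν + k / (N - 1)
      = (N - 1) * ((ν + 1) * (ν + 1 / (N - 1)) - (N - 1 - k) * (1 / (N - 1)) ^ 2) := by
    field_simp
    ring
  rw [← quadratic_eq_zero_iff hN hdisc, hquad, mul_eq_zero, or_iff_right hN, sub_eq_zero]

lemma star_root_add_inv {N k : ℝ} (hN : N - 1 ≠ 0) :
    (-N + √(N ^ 2 - 4 * k)) / (2 * (N - 1)) + 1 / (N - 1)
      = (√(N ^ 2 - 4 * k) - (N - 2)) / (2 * (N - 1)) := by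
  field_simp
  ring

lemma one_le_cast_sub_one {n : ℕ} (hn : 2 ≤ n) : (1 : ℝ) ≤ n - 1 := by
  have : (2 : ℝ) ≤ n := by exact_mod_cast hn
  linarith

section Star

variable {n : ℕ} {z : Fin n}

lemma Qstar_apply_self (i : Fin n) : Qstar n i i = 0 := by simp [Qstar]

lemma Qstar_hub_apply (hz : (z : ℕ) = 0) (j : Fin n) :
    Qstar n z j = if j = z then 0 else 1 / ((n : ℝ) - 1) := by
  simp [Qstar, hz, Fin.ext_iff]

lemma Qstar_leaf_apply (hz : (z : ℕ) = 0) {i : Fin n} (hi : i ≠ z) (j : Fin n) :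
    Qstar n i j = if j = z then 1 / ((n : ℝ) - 1) else 0 := by
  rw [Fin.ne_iff_vne, hz] at hi
  simp [Qstar, hz, hi, Fin.ext_iff]

lemma Qstar_mulVec_hub (hz : (z : ℕ) = 0) (x : Fin n → ℝ) :
    (Qstar n *ᵥ x) z = 1 / ((n : ℝ) - 1) * (∑ j, x j - x z) := by
  simp [mulVec, dotProduct, Qstar_hub_apply hz, ite_mul, Finset.sum_ite, Finset.filter_ne',
    ← Finset.mul_sum, Finset.sum_erase_eq_sub]

lemma Qstar_mulVec_leaf (hz : (z : ℕ) = 0) {i : Fin n} (hi : i ≠ z) (x : Fin n → ℝ) :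
    (Qstar n *ᵥ x) i = 1 / ((n : ℝ) - 1) * x z := by
  simp [mulVec, dotProduct, Qstar_leaf_apply hz hi]

lemma sum_Qstar_hub (hn : 2 ≤ n) (hz : (z : ℕ) = 0) : ∑ l, Qstar n z l = 1 := by
  have hn' : (n : ℝ) - 1 ≠ 0 := by linarith [one_le_cast_sub_one hn]
  simp [Qstar_hub_apply hz, Finset.sum_ite, Finset.filter_ne', Finset.card_erase_of_mem,
    Nat.cast_sub (by omega : 1 ≤ n), hn']

lemma sum_Qstar_leaf (hz : (z : ℕ) = 0) {i : Fin n} (hi : i ≠ z) :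
    ∑ l, Qstar n i l = 1 / ((n : ℝ) - 1) := by
  simp [Qstar_leaf_apply hz hi]

lemma QS_Qstar_mulVec_hub (hn : 2 ≤ n) (hz : (z : ℕ) = 0) (S : Finset (Fin n))
    (x : Fin n → ℝ) :
    (QS (Qstar n) S *ᵥ x) z
      = -x z + if z ∈ S then 0 else 1 / ((n : ℝ) - 1) * (∑ j, x j - x z) := by
  rw [QS_mulVec_apply _ _ _ (Qstar_apply_self z), sum_Qstar_hub hn hz, Qstar_mulVec_hub hz,
    neg_one_mul]

lemma QS_Qstar_mulVec_leaf (hz : (z : ℕ) = 0) {i : Fin n} (hi : i ≠ z) (S : Finset (Fin n))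
    (x : Fin n → ℝ) :
    (QS (Qstar n) S *ᵥ x) i
      = -(1 / ((n : ℝ) - 1)) * x i + if i ∈ S then 0 else 1 / ((n : ℝ) - 1) * x z := by
  rw [QS_mulVec_apply _ _ _ (Qstar_apply_self i), sum_Qstar_leaf hz hi, Qstar_mulVec_leaf hz hi]

theorem lambdaMax_QS_Qstar_of_hub_mem (hn : 2 ≤ n) (hz : (z : ℕ) = 0) {S : Finset (Fin n)}
    (hzS : z ∈ S) : lambdaMax (QS (Qstar n) S) = -(1 / ((n : ℝ) - 1)) := by
  have ha : 1 / ((n : ℝ) - 1) ≤ 1 :=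
    div_le_one_of_le₀ (one_le_cast_sub_one hn) (by linarith [one_le_cast_sub_one hn])
  set leaf : Fin n := ⟨1, hn⟩
  have hleaf : leaf ≠ z := by simp [leaf, Fin.ext_iff, hz]
  refine lambdaMax_eq_of_eigen ⟨Pi.single leaf 1, by simp, ?_⟩ ?_
  · ext i
    rcases eq_or_ne i z with rfl | hi
    · simp [QS_Qstar_mulVec_hub hn hz, hzS, hleaf.symm]
    · by_cases hil : i = leaf
      · subst hil; simp [QS_Qstar_mulVec_leaf hz hi, hleaf]
      · simp [QS_Qstar_mulVec_leaf hz hi, hleaf, hil]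
  · intro ν x hx hxν
    by_contra! hν
    have hxz : x z = 0 := by
      have h := congrFun hxν z
      simp only [QS_Qstar_mulVec_hub hn hz, hzS, if_true, add_zero, Pi.smul_apply,
        smul_eq_mul] at h
      have : (ν + 1) * x z = 0 := by linear_combination -h
      exact (mul_eq_zero.1 this).resolve_left (by linarith)
    refine hx (funext fun i => ?_)
    rcases eq_or_ne i z with rfl | hi
    · exact hxz
    · have h := congrFun hxν i
      simp only [QS_Qstar_mulVec_leaf hz hi, hxz, mul_zero, ite_self, add_zero, Pi.smul_apply,
        smul_eq_mul] at h
      have : (ν + 1 / ((n : ℝ) - 1)) * x i = 0 := by linear_combination -h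
      exact (mul_eq_zero.1 this).resolve_left (by linarith)

lemma QS_Qstar_charEq_of_hub_not_mem (hn : 2 ≤ n) (hz : (z : ℕ) = 0) {S : Finset (Fin n)}
    (hzS : z ∉ S) {ν : ℝ} {x : Fin n → ℝ} (hx : x ≠ 0) (hxν : QS (Qstar n) S *ᵥ x = ν • x)
    (hν : ν ≠ -(1 / ((n : ℝ) - 1))) :
    (ν + 1) * (ν + 1 / ((n : ℝ) - 1)) = ((n : ℝ) - 1 - #S) * (1 / ((n : ℝ) - 1)) ^ 2 := by
  set a := 1 / ((n : ℝ) - 1) with ha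
  have hc : ν + a ≠ 0 := fun h => hν (by linarith)
  have hleaf : ∀ i, i ≠ z → (ν + a) * x i = if i ∈ S then 0 else a * x z := by
    intro i hi
    have h := congrFun hxν i
    rw [QS_Qstar_mulVec_leaf hz hi, Pi.smul_apply, smul_eq_mul] at h
    linear_combination -h
  have hxz : x z ≠ 0 := by
    refine fun h0 => hx (funext fun i => ?_)
    rcases eq_or_ne i z with rfl | hi
    · exact h0
    · have := hleaf i hi
      rw [h0, mul_zero, ite_self] at this
      exact (mul_eq_zero.1 this).resolve_left hc
  have hsum : (ν + a) * ∑ j, x j = (ν + a) * x z + ((n : ℝ) - 1 - #S) * (a * x z) := by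
    have h : ∀ j, (ν + a) * x j
        = (if j ∈ S then 0 else a * x z) + if j = z then (ν + a) * x z - a * x z else 0 := by
      intro j
      rcases eq_or_ne j z with rfl | hj
      · simp [hzS]
      · rw [hleaf j hj, if_neg hj, add_zero]
    rw [Finset.mul_sum, Finset.sum_congr rfl fun j _ => h j, Finset.sum_add_distrib,
      sum_ite_mem_zero_const, Finset.sum_ite_eq' univ z, if_pos (mem_univ z)]
    ring
  have hhub := congrFun hxν z
  rw [QS_Qstar_mulVec_hub hn hz, if_neg hzS, Pi.smul_apply, smul_eq_mul, ← ha] at hhub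
  have : ((ν + 1) * (ν + a) - ((n : ℝ) - 1 - #S) * a ^ 2) * x z = 0 := by
    linear_combination a * hsum - (ν + a) * hhub
  linear_combination (mul_eq_zero.1 this).resolve_right hxz

lemma QS_Qstar_mulVec_eigenvector_of_charEq (hn : 2 ≤ n) (hz : (z : ℕ) = 0)
    {S : Finset (Fin n)} (hzS : z ∉ S) {μ : ℝ}
    (hμ : (μ + 1) * (μ + 1 / ((n : ℝ) - 1)) = ((n : ℝ) - 1 - #S) * (1 / ((n : ℝ) - 1)) ^ 2) :
    let x : Fin n → ℝ := fun j => (if j ∈ S then 0 else 1 / ((n : ℝ) - 1)) + if j = z then μ else 0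
    QS (Qstar n) S *ᵥ x = μ • x := by
  intro x
  have hsum : ∑ j, x j = ((n : ℝ) - #S) * (1 / ((n : ℝ) - 1)) + μ := by
    simp only [x, Finset.sum_add_distrib, sum_ite_mem_zero_const, Finset.sum_ite_eq', mem_univ,
      if_true]
  ext i
  rcases eq_or_ne i z with rfl | hi
  · rw [QS_Qstar_mulVec_hub hn hz, if_neg hzS, hsum]
    simp only [x, if_neg hzS, if_true, Pi.smul_apply, smul_eq_mul]
    linear_combination -hμ
  · by_cases hiS : i ∈ S
    · simp [QS_Qstar_mulVec_leaf hz hi, x, hiS, hi]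
    · simp only [QS_Qstar_mulVec_leaf hz hi, x, if_neg hiS, if_neg hi, if_neg hzS, if_true,
        add_zero, Pi.smul_apply, smul_eq_mul]
      ring

lemma QS_Qstar_mulVec_eigenvector_of_forall_leaf_mem (hn : 2 ≤ n) (hz : (z : ℕ) = 0)
    {S : Finset (Fin n)} (hzS : z ∉ S) (hS : ∀ i, i ≠ z → i ∈ S) :
    let x : Fin n → ℝ := fun j => (1 - 1 / ((n : ℝ) - 1)) + if j = z then 1 / ((n : ℝ) - 1) else 0
    QS (Qstar n) S *ᵥ x = -(1 / ((n : ℝ) - 1)) • x := by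
  intro x
  have hn' : (n : ℝ) - 1 ≠ 0 := by linarith [one_le_cast_sub_one hn]
  have hsum : ∑ j, x j = n * (1 - 1 / ((n : ℝ) - 1)) + 1 / ((n : ℝ) - 1) := by
    simp only [x, Finset.sum_add_distrib, Finset.sum_const, card_univ, Fintype.card_fin,
      nsmul_eq_mul, Finset.sum_ite_eq', mem_univ, if_true]
  ext i
  rcases eq_or_ne i z with rfl | hi
  · rw [QS_Qstar_mulVec_hub hn hz, if_neg hzS, hsum]
    simp only [x, if_true, Pi.smul_apply, smul_eq_mul]
    field_simp
    ring
  · simp [QS_Qstar_mulVec_leaf hz hi, x, hS i hi, hi]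

lemma card_add_one_le_of_hub_not_mem {S : Finset (Fin n)} (hzS : z ∉ S) : (#S : ℝ) + 1 ≤ n := by
  have := Finset.card_lt_univ_of_notMem hzS
  rw [Fintype.card_fin] at this
  exact_mod_cast this

lemma forall_leaf_mem_of_card_add_one_eq {S : Finset (Fin n)} (hzS : z ∉ S) (hk : #S + 1 = n) :
    ∀ i, i ≠ z → i ∈ S := by
  have hSz : S = univ.erase z := by
    refine Finset.eq_of_subset_of_card_le
      (fun j hj => mem_erase.2 ⟨ne_of_mem_of_not_mem hj hzS, mem_univ j⟩) ?_
    rw [card_erase_of_mem (mem_univ z), card_univ, Fintype.card_fin]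
    omega
  intro i hi
  rw [hSz]
  exact mem_erase.2 ⟨hi, mem_univ i⟩

lemma exists_eigenvector_QS_Qstar_of_hub_not_mem (hn : 2 ≤ n) (hz : (z : ℕ) = 0)
    {S : Finset (Fin n)} (hzS : z ∉ S) :
    ∃ x, x ≠ 0 ∧ QS (Qstar n) S *ᵥ x
      = ((-n + √((n : ℝ) ^ 2 - 4 * #S)) / (2 * ((n : ℝ) - 1))) • x := by
  have hn2 : (2 : ℝ) ≤ n := by exact_mod_cast hn
  have hn' : (n : ℝ) - 1 ≠ 0 := by linarith
  have hk := card_add_one_le_of_hub_not_mem hzS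
  have hroot := star_root_add_inv (k := (#S : ℝ)) hn'
  rcases hk.lt_or_eq with hk | hk
  · have hs : (n : ℝ) - 2 < √((n : ℝ) ^ 2 - 4 * #S) := by
      rw [Real.lt_sqrt (by linarith)]; nlinarith
    refine ⟨_, fun h => ?_, QS_Qstar_mulVec_eigenvector_of_charEq hn hz hzS
      ((star_charEq_iff hn' (by nlinarith)).2 (Or.inl rfl))⟩
    have hxz := congrFun h z
    simp only [hzS, if_false, if_true, Pi.zero_apply] at hxz
    have : 0 < (√((n : ℝ) ^ 2 - 4 * #S) - (n - 2)) / (2 * ((n : ℝ) - 1)) :=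
      div_pos (by linarith) (by linarith)
    linarith
  · have hs : √((n : ℝ) ^ 2 - 4 * #S) = n - 2 := by
      rw [show (n : ℝ) ^ 2 - 4 * #S = (n - 2) ^ 2 by linear_combination -4 * hk]
      exact Real.sqrt_sq (by linarith)
    rw [show (-n + √((n : ℝ) ^ 2 - 4 * #S)) / (2 * ((n : ℝ) - 1)) = -(1 / ((n : ℝ) - 1)) by
      linear_combination hroot + hs / (2 * ((n : ℝ) - 1))]
    refine ⟨_, fun h => ?_, QS_Qstar_mulVec_eigenvector_of_forall_leaf_mem hn hz hzS
      (forall_leaf_mem_of_card_add_one_eq hzS (by exact_mod_cast hk))⟩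
    simpa using congrFun h z

theorem lambdaMax_QS_Qstar_of_hub_not_mem (hn : 2 ≤ n) (hz : (z : ℕ) = 0)
    {S : Finset (Fin n)} (hzS : z ∉ S) :
    lambdaMax (QS (Qstar n) S) = (-n + √((n : ℝ) ^ 2 - 4 * #S)) / (2 * ((n : ℝ) - 1)) := by
  have hn2 : (2 : ℝ) ≤ n := by exact_mod_cast hn
  have hn' : (n : ℝ) - 1 ≠ 0 := by linarith
  have hk := card_add_one_le_of_hub_not_mem hzS
  refine lambdaMax_eq_of_eigen (exists_eigenvector_QS_Qstar_of_hub_not_mem hn hz hzS) ?_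
  intro ν x hx hxν
  by_cases hν : ν = -(1 / ((n : ℝ) - 1))
  · have hs : (n : ℝ) - 2 ≤ √((n : ℝ) ^ 2 - 4 * #S) := by
      rw [Real.le_sqrt (by linarith) (by nlinarith)]; nlinarith
    have : 0 ≤ (√((n : ℝ) ^ 2 - 4 * #S) - (n - 2)) / (2 * ((n : ℝ) - 1)) :=
      div_nonneg (by linarith) (by linarith)
    linarith [star_root_add_inv (k := (#S : ℝ)) hn']
  · rcases (star_charEq_iff hn' (by nlinarith)).1
      (QS_Qstar_charEq_of_hub_not_mem hn hz hzS hx hxν hν) with rfl | rfl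
    · exact le_rfl
    · exact div_le_div_of_nonneg_right (by linarith [Real.sqrt_nonneg ((n : ℝ) ^ 2 - 4 * #S)])
        (by linarith)

end Star

lemma neg_half_mul_div_mul_one_sub_sqrt {N k : ℝ} (hN : 0 < N) :
    -(1 / 2) * (N / (N - 1)) * (1 - √(1 - 4 * k / N ^ 2))
      = (-N + √(N ^ 2 - 4 * k)) / (2 * (N - 1)) := by
  rw [show 1 - 4 * k / N ^ 2 = (N ^ 2 - 4 * k) / N ^ 2 by field_simp,
    Real.sqrt_div' _ (by positivity), Real.sqrt_sq hN.le]
  field_simp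
  ring

/-- For the star on `n > 1` nodes with hub node `1` and a nonempty proper subset `S`:
if the hub is in `S`, the largest eigenvalue of `Q_S` is `-1/(n-1)`; if the hub is not in
`S`, it is `-(1/2)(n/(n-1))(1 - √(1 - 4|S|/n²))`. -/
theorem stmt13 (n : ℕ) (hn : 2 ≤ n) (S : Finset (Fin n)) :
    ((⟨0, by omega⟩ : Fin n) ∈ S →
      lambdaMax (QS (Qstar n) S) = -(1 / ((n : ℝ) - 1))) ∧
    ((⟨0, by omega⟩ : Fin n) ∉ S →
      lambdaMax (QS (Qstar n) S)
        = -(1/2) * ((n : ℝ) / ((n : ℝ) - 1))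
            * (1 - Real.sqrt (1 - 4 * (S.card : ℝ) / (n : ℝ) ^ 2))) := by
  refine ⟨lambdaMax_QS_Qstar_of_hub_mem hn rfl, fun hzS => ?_⟩
  rw [lambdaMax_QS_Qstar_of_hub_not_mem hn rfl hzS,
    neg_half_mul_div_mul_one_sub_sqrt (by positivity : (0 : ℝ) < n)]
end
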